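/- arXiv:2307.07185 — 15 statements merged into one kernel-verified Lean document; each statement's English description precedes it below -/
import Mathlib

section
/- Let X be a real normed vector space and K ⊆ X a closed, convex, pointed cone. Suppose A, B, C ⊆ X are nonempty sets such that C is K-bounded and A + C ⊆ C + B + K. Then A ⊆ cl(conv(B + K)). -/
open Set Filter Topology Metric Pointwise

/-- `S` is `K`-bounded: `S ⊆ M + K` for some bounded set `M`. -/
def KBounded {X : Type*} [NormedAddCommGroup X] (K S : Set X) : Prop :=
  ∃ M : Set X, Bornology.IsBounded M ∧ S ⊆ M + K

/-- Conic Rådström cancellation law (Proposition 2 in the paper). -/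
theorem conic_radstrom_cancellation {X : Type*} [NormedAddCommGroup X] [NormedSpace ℝ X]
    (K A B C : Set X)
    (hK_closed : IsClosed K) (hK_conv : Convex ℝ K)
    (hK_cone : ∀ t : ℝ, 0 ≤ t → ∀ x ∈ K, t • x ∈ K)
    (hK_add : K + K ⊆ K) (hK_pointed : K ∩ (-K) = {0})
    (hA : A.Nonempty) (hB : B.Nonempty) (hC : C.Nonempty)
    (hCbd : KBounded K C)
    (h : A + C ⊆ C + B + K) :
    A ⊆ closure (convexHull ℝ (B + K)) := by
  obtain ⟨M, hMbd, hCM⟩ := hCbd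
  intro a ha
  have key : ∀ c ∈ C, ∃ c' ∈ C, ∃ d ∈ B + K, a + c = c' + d := by
    intro c hc
    have hmem : a + c ∈ C + B + K := h (add_mem_add ha hc)
    obtain ⟨cb, hcb, k, hk, hsum⟩ := hmem
    obtain ⟨c', hc', b, hb, rfl⟩ := hcb
    exact ⟨c', hc', b + k, add_mem_add hb hk, by simpa [add_assoc] using hsum.symm⟩
  choose f hf e he hsum using key
  obtain ⟨c₀, hc₀⟩ := hC
  -- the iterated sequence in C
  let c : ℕ → {x : X // x ∈ C} := fun n =>
    Nat.rec ⟨c₀, hc₀⟩ (fun _ p => ⟨f p.1 p.2, hf p.1 p.2⟩) n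
  let dn : ℕ → X := fun n => e (c n).1 (c n).2
  have hdn : ∀ n, dn n ∈ B + K := fun n => he _ _
  have hrec : ∀ n, a + (c n).1 = (c (n + 1)).1 + dn n := fun n => hsum _ _
  have hsumeq : ∀ n : ℕ, n • a + c₀ = (c n).1 + ∑ i ∈ Finset.range n, dn i := by
    intro n
    induction n with
    | zero => simp only [zero_smul, zero_add, Finset.range_zero, Finset.sum_empty, add_zero]; rfl
    | succ n ih =>
      rw [succ_nsmul, Finset.sum_range_succ]
      calc n • a + a + c₀ = a + (n • a + c₀) := by abel
        _ = a + ((c n).1 + ∑ i ∈ Finset.range n, dn i) := by rw [ih]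
        _ = (a + (c n).1) + ∑ i ∈ Finset.range n, dn i := by abel
        _ = _ := by rw [hrec n]; abel
  -- absorption: conv(B+K) + K ⊆ conv(B+K)
  have habs : convexHull ℝ (B + K) + K ⊆ convexHull ℝ (B + K) := by
    calc convexHull ℝ (B + K) + K
        = convexHull ℝ (B + K) + convexHull ℝ K := by rw [hK_conv.convexHull_eq]
      _ = convexHull ℝ (B + K + K) := (convexHull_add _ _).symm
      _ ⊆ convexHull ℝ (B + K) := by
          apply convexHull_mono
          rw [add_assoc]
          exact Set.add_subset_add_left hK_add
  -- decompose c n through the bounded set M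
  have hmemMK : ∀ n, ∃ m ∈ M, ∃ k ∈ K, (c n).1 = m + k := by
    intro n
    obtain ⟨m, hm, k, hk, hmk⟩ := hCM (c n).2
    exact ⟨m, hm, k, hk, hmk.symm⟩
  choose m hm k hk hmk using hmemMK
  set x : ℕ → X := fun n => a + (n : ℝ)⁻¹ • (c₀ - m n) with hx
  -- membership of x n for n ≥ 1
  have hxmem : ∀ n : ℕ, 1 ≤ n → x n ∈ convexHull ℝ (B + K) := by
    intro n hn
    have hn0 : (n : ℝ) ≠ 0 := by positivity
    have heq : x n = (n : ℝ)⁻¹ • (∑ i ∈ Finset.range n, dn i) + (n : ℝ)⁻¹ • k n := by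
      have h1 : (n : ℝ) • a + c₀ = m n + k n + ∑ i ∈ Finset.range n, dn i := by
        rw [Nat.cast_smul_eq_nsmul, hsumeq n, hmk n]
      have h2 : (n : ℝ) • (x n) = (n : ℝ) • a + c₀ - m n := by
        rw [hx]
        simp only [smul_add, smul_sub, smul_inv_smul₀ hn0]
        abel
      have h3 : (n : ℝ) • (x n) = (∑ i ∈ Finset.range n, dn i) + k n := by
        rw [h2, h1]; abel
      calc x n = (n : ℝ)⁻¹ • ((n : ℝ) • x n) := (inv_smul_smul₀ hn0 _).symm
        _ = _ := by rw [h3, smul_add]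
    rw [heq]
    apply habs
    apply Set.add_mem_add
    · have : (n : ℝ)⁻¹ • (∑ i ∈ Finset.range n, dn i)
          = ∑ i ∈ Finset.range n, (n : ℝ)⁻¹ • dn i := Finset.smul_sum
      rw [this]
      apply (convex_convexHull ℝ (B + K)).sum_mem
      · intro i _; positivity
      · rw [Finset.sum_const, Finset.card_range, nsmul_eq_mul, mul_inv_cancel₀ hn0]
      · exact fun i _ => subset_convexHull ℝ _ (hdn i)
    · exact hK_cone _ (by positivity) _ (hk n)
  -- x n → a
  obtain ⟨R, hR⟩ := hMbd.subset_closedBall 0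
  have hxtend : Tendsto x atTop (𝓝 a) := by
    have hv : Tendsto (fun n : ℕ => (n : ℝ)⁻¹ • (c₀ - m n)) atTop (𝓝 0) := by
      apply squeeze_zero_norm (a := fun n : ℕ => (‖c₀‖ + R) * ((n : ℝ)⁻¹))
      · intro n
        rw [norm_smul, norm_inv, Real.norm_natCast, mul_comm]
        apply mul_le_mul_of_nonneg_right _ (by positivity)
        calc ‖c₀ - m n‖ ≤ ‖c₀‖ + ‖m n‖ := norm_sub_le _ _
          _ ≤ ‖c₀‖ + R := by
              have := hR (hm n)
              rw [mem_closedBall, dist_zero_right] at this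
              linarith
      · have : Tendsto (fun n : ℕ => (n : ℝ)⁻¹) atTop (𝓝 0) :=
          tendsto_inv_atTop_zero.comp tendsto_natCast_atTop_atTop
        simpa using this.const_mul (‖c₀‖ + R)
    have := tendsto_const_nhds.add hv (f := fun _ : ℕ => a) (x := atTop)
    simpa using this
  exact mem_closure_of_tendsto hxtend (eventually_atTop.mpr ⟨1, hxmem⟩)
end

section
/- Let X be a real normed vector space. Suppose A, B, C ⊆ X are nonempty sets such that C is weakly compact (compact in the weak topology of X), B is open in the norm topology, and A + C ⊆ C + B. Then A ⊆ conv B. -/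
open Set Filter Topology Metric Pointwise

/-- Rådström-type cancellation with a weakly compact set `C` and an open set `B`. -/
theorem radstrom_cancellation_weakly_compact {X : Type*} [NormedAddCommGroup X]
    [NormedSpace ℝ X] (A B C : Set X)
    (hA : A.Nonempty) (hB : B.Nonempty) (hC : C.Nonempty)
    (hCcomp : IsCompact ((toWeakSpace ℝ X) '' C))
    (hBopen : IsOpen B)
    (h : A + C ⊆ C + B) :
    A ⊆ convexHull ℝ B := by
  intro a ha
  by_contra hnot
  -- B is contained in the interior of its convex hull
  have hBsub : B ⊆ interior (convexHull ℝ B) :=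
    hBopen.subset_interior_iff.mpr (subset_convexHull ℝ B)
  have hIconv : Convex ℝ (interior (convexHull ℝ B)) := (convex_convexHull ℝ B).interior
  have hanot : a ∉ interior (convexHull ℝ B) := fun hx => hnot (interior_subset hx)
  -- separate a from interior (convexHull ℝ B)
  obtain ⟨f, hf⟩ := geometric_hahn_banach_open_point hIconv isOpen_interior hanot
  -- f is continuous on the weak space
  have hfw : Continuous fun x : WeakSpace ℝ X => f ((toWeakSpace ℝ X).symm x) :=
    WeakBilin.eval_continuous ((topDualPairing ℝ X).flip) f
  -- f attains its max on C (via the weak compactness)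
  obtain ⟨y, hyC, hymax⟩ := hCcomp.exists_isMaxOn (hC.image _)
    (hfw.continuousOn : ContinuousOn (fun x : WeakSpace ℝ X => f ((toWeakSpace ℝ X).symm x)) _)
  obtain ⟨c, hcC, rfl⟩ := hyC
  have hmax : ∀ c' ∈ C, f c' ≤ f c := by
    intro c' hc'
    have := hymax (Set.mem_image_of_mem _ hc')
    simpa using this
  -- a + c ∈ C + B
  obtain ⟨c', hc', b, hb, hsum⟩ := h (Set.add_mem_add ha hcC)
  have hfb : f b < f a := hf b (hBsub hb)
  have : f a + f c = f c' + f b := by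
    have := congrArg f hsum
    simpa [map_add] using this.symm
  have hlt : f c < f c' := by
    have h1 := hmax c' hc'
    linarith
  exact absurd (hmax c' hc') (not_le.mpr hlt)
end

section
/- Let X = ℓ² be the real Hilbert space of square-summable sequences and K = ℓ²₊ = {x ∈ ℓ² : xₚ ≥ 0 for all p} the cone of componentwise nonnegative sequences. Then the closed unit ball of ℓ² is not K-sequentially compact. -/
open Set Filter Topology Metric Pointwise
open scoped ENNReal

/-- `S` is `K`-sequentially compact: for every sequence in `S` there is a sequence in `K`
such that the difference has a subsequence converging in norm to an element of `S`. -/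
def KSeqCompact {X : Type*} [NormedAddCommGroup X] (K S : Set X) : Prop :=
  ∀ a : ℕ → X, (∀ n, a n ∈ S) → ∃ c : ℕ → X, (∀ n, c n ∈ K) ∧
    ∃ φ : ℕ → ℕ, StrictMono φ ∧ ∃ l ∈ S, Tendsto (fun n => a (φ n) - c (φ n)) atTop (𝓝 l)

/-- The closed unit ball of `ℓ²` is not `ℓ²₊`-sequentially compact. -/
theorem closedBall_not_KSeqCompact_lp_two :
    ¬ KSeqCompact {x : lp (fun _ : ℕ => ℝ) 2 | ∀ p : ℕ, 0 ≤ x p}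
      (Metric.closedBall (0 : lp (fun _ : ℕ => ℝ) 2) 1) := by
  intro h
  set a : ℕ → lp (fun _ : ℕ => ℝ) 2 := fun n => lp.single 2 n (-1) with ha_def
  have ha : ∀ n, a n ∈ Metric.closedBall (0 : lp (fun _ : ℕ => ℝ) 2) 1 := by
    intro n
    rw [Metric.mem_closedBall, dist_zero_right]
    have : ‖a n‖ = ‖(fun _ : ℕ => (-1 : ℝ)) n‖ :=
      lp.norm_single (E := fun _ : ℕ => ℝ) (p := 2) (by norm_num) n (-1 : ℝ)
    simp [this]
  obtain ⟨c, hc, φ, hφ, l, hl, htend⟩ := h a ha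
  -- each coordinate of a m is nonpositive
  have ha_nonpos : ∀ m p, a m p ≤ 0 := by
    intro m p
    rcases eq_or_ne p m with rfl | hne
    · rw [ha_def]; simp [lp.single_apply_self]
    · rw [ha_def]; simp [lp.single_apply_ne (E := fun _ : ℕ => ℝ) 2 m (-1 : ℝ) hne, Pi.single_apply, hne]
  have hdiff_nonpos : ∀ m p, (a m - c m) p ≤ 0 := by
    intro m p
    have : (a m - c m) p = a m p - c m p := by
      simp [lp.coeFn_sub]
    rw [this]
    have := hc m p
    linarith [ha_nonpos m p]
  -- coordinatewise convergence
  have hpt : ∀ p : ℕ, Tendsto (fun n => (a (φ n) - c (φ n)) p) atTop (𝓝 (l p)) := by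
    intro p
    rw [tendsto_iff_norm_sub_tendsto_zero]
    have hb : ∀ n, ‖(a (φ n) - c (φ n)) p - l p‖ ≤ ‖a (φ n) - c (φ n) - l‖ := by
      intro n
      have : ((a (φ n) - c (φ n) - l) : lp (fun _ : ℕ => ℝ) 2) p
          = (a (φ n) - c (φ n)) p - l p := by simp [lp.coeFn_sub]
      rw [← this]
      exact lp.norm_apply_le_norm (by norm_num) _ p
    have h0 : Tendsto (fun n => ‖a (φ n) - c (φ n) - l‖) atTop (𝓝 0) :=
      tendsto_iff_norm_sub_tendsto_zero.mp htend
    exact squeeze_zero (fun n => norm_nonneg _) hb h0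
  have hl_nonpos : ∀ p, l p ≤ 0 := fun p =>
    le_of_tendsto' (hpt p) (fun n => hdiff_nonpos (φ n) p)
  -- coordinates of l tend to 0
  have hsum : Summable (fun p => ‖l p‖ ^ ((2 : ℝ≥0∞).toReal)) :=
    (lp.memℓp l).summable (by norm_num)
  have hl0 : Tendsto (fun p => ‖l p‖ ^ ((2 : ℝ≥0∞).toReal)) atTop (𝓝 0) :=
    hsum.tendsto_atTop_zero
  have hev1 : ∀ᶠ p in atTop, ‖l p‖ < 1 / 2 := by
    filter_upwards [hl0.eventually (gt_mem_nhds (by norm_num : (0:ℝ) < 1/4))] with p hp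
    have h2 : ((2 : ℝ≥0∞).toReal) = ((2 : ℕ) : ℝ) := by norm_num
    rw [h2, Real.rpow_natCast] at hp
    nlinarith [norm_nonneg (l p), abs_nonneg (l p)]
  have hev2 : ∀ᶠ n in atTop, ‖l (φ n)‖ < 1 / 2 := hφ.tendsto_atTop.eventually hev1
  -- norm lower bound, eventually
  have h1 : ∀ᶠ n in atTop, (1:ℝ) / 2 ≤ ‖a (φ n) - c (φ n) - l‖ := by
    filter_upwards [hev2] with n hn
    have key : ((a (φ n) - c (φ n) - l) : lp (fun _ : ℕ => ℝ) 2) (φ n)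
        = a (φ n) (φ n) - c (φ n) (φ n) - l (φ n) := by simp [lp.coeFn_sub]
    have hval : a (φ n) (φ n) = -1 := by rw [ha_def]; simp [lp.single_apply_self]
    have hle : ‖((a (φ n) - c (φ n) - l) : lp (fun _ : ℕ => ℝ) 2) (φ n)‖
        ≤ ‖a (φ n) - c (φ n) - l‖ := lp.norm_apply_le_norm (by norm_num) _ (φ n)
    rw [key, hval] at hle
    have hc' := hc (φ n) (φ n)
    have habs : |l (φ n)| < 1 / 2 := hn
    have : (1:ℝ) / 2 ≤ ‖-1 - c (φ n) (φ n) - l (φ n)‖ := by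
      rw [Real.norm_eq_abs]
      have hl2 : -(1/2) < l (φ n) := by
        have := neg_abs_le (l (φ n)); linarith
      have : -1 - c (φ n) (φ n) - l (φ n) ≤ -(1/2) := by linarith
      calc (1:ℝ)/2 ≤ -(-1 - c (φ n) (φ n) - l (φ n)) := by linarith
        _ ≤ |-1 - c (φ n) (φ n) - l (φ n)| := neg_le_abs _
    linarith
  have h0 : Tendsto (fun n => ‖a (φ n) - c (φ n) - l‖) atTop (𝓝 0) :=
    tendsto_iff_norm_sub_tendsto_zero.mp htend
  have h2 : ∀ᶠ n in atTop, ‖a (φ n) - c (φ n) - l‖ < 1/2 :=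
    h0.eventually (gt_mem_nhds (by norm_num))
  obtain ⟨n, hn1, hn2⟩ := (h1.and h2).exists
  linarith
end

section
/- Let X be a real normed vector space and K ⊆ X a closed, convex, pointed cone. If x* belongs to the positive dual cone K⁺ (i.e., x*(k) ≥ 0 for all k ∈ K) and A ⊆ X is nonempty and weakly K-compact, then x* attains its minimum on A, i.e., there exists ā ∈ A with x*(ā) ≤ x*(a) for all a ∈ A. -/
open Set Filter Topology Metric Pointwise

/-- A set is weakly open if it is open in the weak topology σ(X, X*). -/
def WeaklyOpen {X : Type*} [NormedAddCommGroup X] [NormedSpace ℝ X] (U : Set X) : Prop :=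
  IsOpen ((toWeakSpace ℝ X) '' U)

/-- `S` is weakly `K`-compact: every cover of `S` by sets `U + K` with `U` weakly open
admits a finite subcover. -/
def WeaklyKCompact {X : Type*} [NormedAddCommGroup X] [NormedSpace ℝ X] (K S : Set X) : Prop :=
  ∀ {ι : Type*} (U : ι → Set X), (∀ i, WeaklyOpen (U i)) → S ⊆ ⋃ i, (U i + K) →
    ∃ t : Finset ι, S ⊆ ⋃ i ∈ t, (U i + K)

lemma weaklyOpen_preimage_Ioi {X : Type*} [NormedAddCommGroup X] [NormedSpace ℝ X]
    (f : X →L[ℝ] ℝ) (c : ℝ) : WeaklyOpen (f ⁻¹' Set.Ioi c) := by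
  have himg : (toWeakSpace ℝ X) '' (f ⁻¹' Set.Ioi c) =
      (fun x : WeakSpace ℝ X => f ((toWeakSpace ℝ X).symm x)) ⁻¹' Set.Ioi c := by
    ext x
    constructor
    · rintro ⟨y, hy, rfl⟩
      simpa using hy
    · intro hx
      exact ⟨(toWeakSpace ℝ X).symm x, hx, by simp⟩
  rw [WeaklyOpen, himg]
  have hcont : Continuous fun x : WeakSpace ℝ X => f ((toWeakSpace ℝ X).symm x) := by
    have : (fun x : WeakSpace ℝ X => f ((toWeakSpace ℝ X).symm x)) =
        fun x : WeakBilin (topDualPairing ℝ X).flip => (topDualPairing ℝ X).flip x f := rfl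
    rw [this]
    exact WeakBilin.eval_continuous _ f
  exact isOpen_Ioi.preimage hcont

/-- A positive functional attains its minimum on a weakly `K`-compact set (Lemma 6). -/
theorem positive_functional_attains_min {X : Type*} [NormedAddCommGroup X] [NormedSpace ℝ X]
    (K : Set X)
    (hK_closed : IsClosed K) (hK_conv : Convex ℝ K)
    (hK_cone : ∀ t : ℝ, 0 ≤ t → ∀ x ∈ K, t • x ∈ K)
    (hK_add : K + K ⊆ K) (hK_pointed : K ∩ (-K) = {0})
    (f : X →L[ℝ] ℝ) (hf : ∀ k ∈ K, 0 ≤ f k)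
    (A : Set X) (hA : A.Nonempty) (hAcomp : WeaklyKCompact K A) :
    ∃ abar ∈ A, ∀ a ∈ A, f abar ≤ f a := by
  have h0K : (0 : X) ∈ K := by
    have : (0 : X) ∈ K ∩ (-K) := by rw [hK_pointed]; rfl
    exact this.1
  by_contra hcon
  push_neg at hcon
  -- index type: rationals q such that some value of f on A is below q
  set Q := {q : ℚ // ∃ a ∈ A, f a < (q : ℝ)} with hQ
  set U : ULift.{_} Q → Set X := fun i => f ⁻¹' Set.Ioi ((i.down.1 : ℝ)) with hU
  have hUopen : ∀ i, WeaklyOpen (U i) := fun i => weaklyOpen_preimage_Ioi f _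
  have hUK : ∀ i, U i + K ⊆ U i := by
    rintro i x ⟨u, hu, k, hk, rfl⟩
    have h1 : ((i.down.1 : ℝ)) < f u := hu
    have hfk := hf k hk
    show ((i.down.1 : ℝ)) < f (u + k)
    rw [map_add]
    linarith
  have hcover : A ⊆ ⋃ i, (U i + K) := by
    intro a ha
    obtain ⟨a', ha', hlt⟩ := hcon a ha
    obtain ⟨q, hq1, hq2⟩ := exists_rat_btwn hlt
    refine Set.mem_iUnion.2 ⟨⟨⟨q, a', ha', hq1⟩⟩, ?_⟩
    exact ⟨a, hq2, 0, h0K, by simp⟩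
  obtain ⟨t, ht⟩ := hAcomp U hUopen hcover
  obtain ⟨a0, ha0⟩ := hA
  have htne : t.Nonempty := by
    rcases Set.mem_iUnion₂.1 (ht ha0) with ⟨i, hi, _⟩
    exact ⟨i, hi⟩
  obtain ⟨istar, histar, hmin⟩ := t.exists_min_image (fun i => (i.down.1 : ℚ)) htne
  obtain ⟨abar, habar, hlt⟩ := istar.down.2
  rcases Set.mem_iUnion₂.1 (ht habar) with ⟨i, hi, hmem⟩
  have h1 : ((i.down.1 : ℝ)) < f abar := hUK i hmem
  have h2 : (istar.down.1 : ℚ) ≤ i.down.1 := hmin i hi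
  have h3 : ((istar.down.1 : ℝ)) ≤ ((i.down.1 : ℝ)) := by exact_mod_cast h2
  linarith
end

section
/- Let X be a real normed vector space and K ⊆ X a closed, convex, pointed cone with nonempty interior. Suppose A, B, C ⊆ X are nonempty sets, C is weakly K-compact, and A + C ⊆ C + B + int K. Then A ⊆ conv B + int K. -/
open Set Filter Topology Metric Pointwise

/-- Conic cancellation law for a solid cone (Proposition 7). -/
theorem conic_cancellation_solid {X : Type*} [NormedAddCommGroup X] [NormedSpace ℝ X]
    (K A B C : Set X)
    (hK_closed : IsClosed K) (hK_conv : Convex ℝ K)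
    (hK_cone : ∀ t : ℝ, 0 ≤ t → ∀ x ∈ K, t • x ∈ K)
    (hK_add : K + K ⊆ K) (hK_pointed : K ∩ (-K) = {0})
    (hK_solid : (interior K).Nonempty)
    (hA : A.Nonempty) (hB : B.Nonempty) (hC : C.Nonempty)
    (hCcomp : WeaklyKCompact K C)
    (h : A + C ⊆ C + B + interior K) :
    A ⊆ convexHull ℝ B + interior K := by
  classical
  -- basic facts about the cone
  obtain ⟨k₀, hk₀⟩ := hK_solid
  have h0K : (0 : X) ∈ K := by
    simpa using hK_cone 0 le_rfl k₀ (interior_subset hk₀)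
  have hintK_add : interior K + K ⊆ interior K := by
    apply interior_maximal
    · exact (Set.add_subset_add_right interior_subset).trans hK_add
    · exact isOpen_interior.add_right
  have hsmul_int : ∀ t : ℝ, 0 < t → ∀ x ∈ interior K, t • x ∈ interior K := by
    intro t ht x hx
    have h1 : t • interior K ⊆ K := by
      intro y hy
      obtain ⟨z, hz, rfl⟩ := hy
      exact hK_cone t ht.le z (interior_subset hz)
    have h2 : IsOpen (t • interior K) := isOpen_interior.smul₀ (ne_of_gt ht)
    exact interior_maximal h1 h2 ⟨x, hx, rfl⟩
  intro a ha
  by_contra haS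
  set S : Set X := convexHull ℝ B + interior K with hSdef
  have hSconv : Convex ℝ S := (convex_convexHull ℝ B).add hK_conv.interior
  have hSopen : IsOpen S := isOpen_interior.add_left
  obtain ⟨f, hf⟩ := geometric_hahn_banach_point_open hSconv hSopen haS
  obtain ⟨b₀, hb₀⟩ := hB
  -- f a < f b + f k for every b ∈ B and k ∈ interior K
  have hkey : ∀ b ∈ B, ∀ k ∈ interior K, f a < f b + f k := by
    intro b hb k hk
    have : b + k ∈ S := Set.add_mem_add (subset_convexHull ℝ B hb) hk
    have := hf _ this
    simpa [map_add] using this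
  -- f is nonnegative on K
  have hfK : ∀ k ∈ K, 0 ≤ f k := by
    intro k hk
    by_contra hneg
    push_neg at hneg
    set t : ℝ := max 1 ((f a - f b₀ - f k₀) / f k) with ht
    have ht0 : 0 < t := lt_of_lt_of_le one_pos (le_max_left _ _)
    have hmem : k₀ + t • k ∈ interior K :=
      hintK_add (Set.add_mem_add hk₀ (hK_cone t ht0.le k hk))
    have h1 : f a < f b₀ + (f k₀ + t * f k) := by
      have := hkey b₀ hb₀ _ hmem
      simpa [map_add, map_smul, smul_eq_mul] using this
    have h2 : (f a - f b₀ - f k₀) / f k ≤ t := le_max_right _ _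
    have h3 : t * f k ≤ f a - f b₀ - f k₀ := (div_le_iff_of_neg hneg).mp h2
    linarith
  -- for every c ∈ C there is c' ∈ C with f c' < f c
  have key : ∀ c ∈ C, ∃ c' ∈ C, f c' < f c := by
    intro c hc
    have hmem : a + c ∈ C + B + interior K := h (Set.add_mem_add ha hc)
    obtain ⟨y, hy, k, hk, hyk⟩ := hmem
    obtain ⟨c', hc', b, hb, rfl⟩ := hy
    refine ⟨c', hc', ?_⟩
    have h1 : f a < f b + f k := hkey b hb k hk
    have h2 : f c' + f b + f k = f a + f c := by
      have := congrArg f hyk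
      simpa [map_add] using this
    linarith
  choose g hgC hglt using key
  -- the weakly open sets
  have hWopen : ∀ r : ℝ, WeaklyOpen ((f : X → ℝ) ⁻¹' Set.Ioi r) := by
    intro r
    have hcont : Continuous fun x : WeakSpace ℝ X => f x :=
      WeakBilin.eval_continuous _ f
    have himg : (toWeakSpace ℝ X) '' ((f : X → ℝ) ⁻¹' Set.Ioi r)
        = (fun x : WeakSpace ℝ X => f x) ⁻¹' Set.Ioi r := by
      ext x
      constructor
      · rintro ⟨y, hy, rfl⟩; exact hy
      · intro hx; exact ⟨(toWeakSpace ℝ X).symm x, hx, by simp⟩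
    rw [WeaklyOpen, himg]
    exact hcont.isOpen_preimage _ isOpen_Ioi
  set P : ℝ → Prop := fun r => ∃ c, ∃ hc : c ∈ C, f (g c hc) = r with hPdef
  have hUopen : ∀ r : ℝ,
      WeaklyOpen (if P r then (f : X → ℝ) ⁻¹' Set.Ioi r else (∅ : Set X)) := by
    intro r
    by_cases hp : P r
    · simpa [hp] using hWopen r
    · simp [hp, WeaklyOpen]
  obtain ⟨t, htcov⟩ := hCcomp
      (fun r : ULift ℝ => if P r.down then (f : X → ℝ) ⁻¹' Set.Ioi r.down else (∅ : Set X))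
      (fun r => hUopen r.down) (by
        intro c hc
        refine Set.mem_iUnion.mpr ⟨⟨f (g c hc)⟩, ?_⟩
        have hp : P (f (g c hc)) := ⟨c, hc, rfl⟩
        dsimp only
        rw [if_pos hp]
        exact ⟨c, hglt c hc, 0, h0K, add_zero c⟩)
  -- extract a minimal threshold among the finitely many used ones
  obtain ⟨c₀, hc₀⟩ := hC
  have hcov' : ∀ c ∈ C, ∃ r ∈ t, P r.down ∧ r.down < f c := by
    intro c hc
    obtain ⟨r, hrt, hrmem⟩ := Set.mem_iUnion₂.mp (htcov hc)
    by_cases hp : P r.down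
    · rw [if_pos hp] at hrmem
      obtain ⟨u, hu, k, hk, huk⟩ := hrmem
      have : f u + f k = f c := by
        have := congrArg f huk
        simpa [map_add] using this
      exact ⟨r, hrt, hp, by have := hfK k hk; have hu' : r.down < f u := hu; linarith⟩
    · rw [if_neg hp] at hrmem
      obtain ⟨u, hu, k, hk, huk⟩ := hrmem
      exact hu.elim
  set T : Finset (ULift ℝ) := t.filter (fun r => P r.down) with hT
  have hTne : T.Nonempty := by
    obtain ⟨r, hrt, hp, -⟩ := hcov' c₀ hc₀
    exact ⟨r, Finset.mem_filter.mpr ⟨hrt, hp⟩⟩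
  obtain ⟨r₀, hr₀T, hr₀min⟩ := T.exists_min_image (fun r => r.down) hTne
  obtain ⟨c₁, hc₁, hfc₁⟩ := (Finset.mem_filter.mp hr₀T).2
  have hgc₁ : g c₁ hc₁ ∈ C := hgC _ _
  obtain ⟨r, hrt, hp, hrlt⟩ := hcov' _ hgc₁
  have hrT : r ∈ T := Finset.mem_filter.mpr ⟨hrt, hp⟩
  have h5 : r₀.down ≤ r.down := hr₀min r hrT
  rw [hfc₁] at hrlt
  linarith
end

section
/- Let X be a real normed vector space and K ⊆ X a closed, convex, pointed cone. Suppose A, B, C ⊆ X are nonempty sets, C is weakly K-compact, B is open in the norm topology, and A + C ⊆ C + B + K. Then A ⊆ conv B + K. -/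
open Set Filter Topology Metric Pointwise

/-- The convex hull of an open set is open. -/
lemma isOpen_convexHull_of_isOpen {X : Type*} [NormedAddCommGroup X] [NormedSpace ℝ X]
    {B : Set X} (hB : IsOpen B) : IsOpen (convexHull ℝ B) := by
  have h1 : convexHull ℝ B ⊆ interior (convexHull ℝ B) :=
    convexHull_min (hB.subset_interior_iff.2 (subset_convexHull ℝ B))
      (convex_convexHull ℝ B).interior
  have : convexHull ℝ B = interior (convexHull ℝ B) :=
    le_antisymm h1 interior_subset
  rw [this]; exact isOpen_interior

/-- A sublevel set of a continuous linear functional is weakly open. -/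
lemma weaklyOpen_sublevel {X : Type*} [NormedAddCommGroup X] [NormedSpace ℝ X]
    (f : X →L[ℝ] ℝ) (r : ℝ) : WeaklyOpen {x : X | f x < r} := by
  have hcont : Continuous fun x : WeakSpace ℝ X => f ((toWeakSpace ℝ X).symm x) := by
    exact WeakBilin.eval_continuous (topDualPairing ℝ X).flip f
  have : (toWeakSpace ℝ X) '' {x : X | f x < r}
      = {x : WeakSpace ℝ X | f ((toWeakSpace ℝ X).symm x) < r} := by
    ext y
    constructor
    · rintro ⟨x, hx, rfl⟩
      simpa using hx
    · intro hy
      exact ⟨(toWeakSpace ℝ X).symm y, hy, by simp⟩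
  rw [WeaklyOpen, this]
  exact isOpen_lt hcont continuous_const

/-- Conic cancellation law with open `B` (Proposition 8). -/
theorem conic_cancellation_open {X : Type*} [NormedAddCommGroup X] [NormedSpace ℝ X]
    (K A B C : Set X)
    (hK_closed : IsClosed K) (hK_conv : Convex ℝ K)
    (hK_cone : ∀ t : ℝ, 0 ≤ t → ∀ x ∈ K, t • x ∈ K)
    (hK_add : K + K ⊆ K) (hK_pointed : K ∩ (-K) = {0})
    (hA : A.Nonempty) (hB : B.Nonempty) (hC : C.Nonempty)
    (hCcomp : WeaklyKCompact K C)
    (hBopen : IsOpen B)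
    (h : A + C ⊆ C + B + K) :
    A ⊆ convexHull ℝ B + K := by
  classical
  have hK0 : (0 : X) ∈ K := by
    have : (0 : X) ∈ K ∩ (-K) := hK_pointed ▸ rfl
    exact this.1
  intro a ha
  by_contra haS
  set S : Set X := convexHull ℝ B + K with hS
  -- S is open and convex
  have hSopen : IsOpen S := (isOpen_convexHull_of_isOpen hBopen).add_right
  have hSconv : Convex ℝ S := (convex_convexHull ℝ B).add hK_conv
  -- separate a from S
  obtain ⟨f, hf⟩ := geometric_hahn_banach_open_point hSconv hSopen haS
  -- convexHull B ⊆ S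
  have hBS : ∀ b ∈ convexHull ℝ B, b ∈ S := fun b hb => ⟨b, hb, 0, hK0, add_zero b⟩
  obtain ⟨b₀, hb₀⟩ := hB
  have hb₀c : b₀ ∈ convexHull ℝ B := subset_convexHull ℝ B hb₀
  have hb₀a : f b₀ < f a := hf _ (hBS _ hb₀c)
  -- f is nonpositive on K
  have hfK : ∀ k ∈ K, f k ≤ 0 := by
    intro k hk
    by_contra hpos
    push_neg at hpos
    have ht : (0:ℝ) ≤ (f a - f b₀) / f k := div_nonneg (by linarith) hpos.le
    have hmem : b₀ + ((f a - f b₀) / f k) • k ∈ S :=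
      ⟨b₀, hb₀c, _, hK_cone _ ht k hk, rfl⟩
    have := hf _ hmem
    rw [map_add, map_smul] at this
    have : f b₀ + (f a - f b₀) / f k * f k < f a := this
    rw [div_mul_cancel₀ _ (ne_of_gt hpos)] at this
    linarith
  -- f attains its supremum on C
  have hsup : ∃ c₀ ∈ C, ∀ c ∈ C, f c ≤ f c₀ := by
    by_contra hno
    push_neg at hno
    set P : ℝ → Prop := fun r => ∃ c ∈ C, f c = r with hP
    set U : ULift ℝ → Set X :=
      fun r => if P r.down then {x : X | f x < r.down} else ∅ with hU
    have hUopen : ∀ r, WeaklyOpen (U r) := by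
      intro r
      by_cases hr : P r.down
      · simpa [hU, hr] using weaklyOpen_sublevel f r.down
      · simp [hU, hr, WeaklyOpen]
    have hcover : C ⊆ ⋃ r, (U r + K) := by
      intro x hx
      obtain ⟨c, hc, hxc⟩ := hno x hx
      refine mem_iUnion.2 ⟨ULift.up (f c), x, ?_, 0, hK0, add_zero x⟩
      simp only [hU, if_pos (show P (f c) from ⟨c, hc, rfl⟩)]
      exact hxc
    obtain ⟨t, ht⟩ := hCcomp U hUopen hcover
    -- membership in U r + K gives a strict bound, and r comes from C
    have htC : ∀ x ∈ C, ∃ r ∈ t, P r.down ∧ f x < r.down := by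
      intro x hx
      obtain ⟨r, hrt, hxr⟩ := mem_iUnion₂.1 (ht hx)
      obtain ⟨u, hu, k, hk, rfl⟩ := hxr
      by_cases hr : P r.down
      · rw [hU] at hu; simp only [if_pos hr, mem_setOf_eq] at hu
        have := hfK k hk
        refine ⟨r, hrt, hr, by simp only [map_add]; linarith⟩
      · rw [hU] at hu; simp [if_neg hr] at hu
    -- pick element of t∩P with maximal r value
    obtain ⟨x₀, hx₀⟩ := hC
    obtain ⟨r₁, hr₁t, hr₁P, _⟩ := htC x₀ hx₀
    set t' := t.filter (fun r => P r.down) with ht'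
    have ht'ne : t'.Nonempty := ⟨r₁, Finset.mem_filter.2 ⟨hr₁t, hr₁P⟩⟩
    obtain ⟨rm, hrmt', hrmmax⟩ := t'.exists_max_image (fun r => r.down) ht'ne
    obtain ⟨hrmt, hrmP⟩ := Finset.mem_filter.1 hrmt'
    obtain ⟨cm, hcmC, hcmf⟩ := hrmP
    obtain ⟨r', hr't, hr'P, hcmr'⟩ := htC cm hcmC
    have : r'.down ≤ rm.down := hrmmax r' (Finset.mem_filter.2 ⟨hr't, hr'P⟩)
    rw [hcmf] at hcmr'
    linarith
  obtain ⟨c₀, hc₀C, hc₀max⟩ := hsup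
  -- final contradiction
  have hmem : a + c₀ ∈ C + B + K := h ⟨a, ha, c₀, hc₀C, rfl⟩
  obtain ⟨cb, ⟨c', hc', b, hbB, rfl⟩, k, hk, heq⟩ := hmem
  have hfb : f b < f a := hf _ (hBS _ (subset_convexHull ℝ B hbB))
  have := congrArg f heq
  simp only [map_add] at this
  have h1 : f c' ≤ f c₀ := hc₀max c' hc'
  have h2 : f k ≤ 0 := hfK k hk
  linarith
end

section
/- Let X be a real normed vector space and K ⊆ X a closed, convex, pointed cone. Suppose A, B, C ⊆ X are nonempty sets, C is weakly K-compact, B is open and convex, and A ⊄ B + K. Then A + C ⊄ C + B + K. -/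
open Set Filter Topology Metric Pointwise

lemma weaklyOpen_lt {X : Type*} [NormedAddCommGroup X] [NormedSpace ℝ X] (f : X →L[ℝ] ℝ)
    (t : ℝ) : WeaklyOpen {x : X | f x < t} := by
  unfold WeaklyOpen
  rw [LinearEquiv.image_eq_preimage_symm]
  have hc : Continuous fun y : WeakSpace ℝ X => f ((toWeakSpace ℝ X).symm y) :=
    WeakBilin.eval_continuous (topDualPairing ℝ X).flip f
  exact isOpen_lt hc continuous_const

lemma weaklyOpen_empty {X : Type*} [NormedAddCommGroup X] [NormedSpace ℝ X] :
    WeaklyOpen (∅ : Set X) := by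
  unfold WeaklyOpen
  rw [Set.image_empty]
  exact isOpen_empty

/-- Set orders are insensitive to the addition of weakly `K`-compact sets (Corollary 9). -/
theorem set_order_insensitive {X : Type*} [NormedAddCommGroup X] [NormedSpace ℝ X]
    (K A B C : Set X)
    (hK_closed : IsClosed K) (hK_conv : Convex ℝ K)
    (hK_cone : ∀ t : ℝ, 0 ≤ t → ∀ x ∈ K, t • x ∈ K)
    (hK_add : K + K ⊆ K) (hK_pointed : K ∩ (-K) = {0})
    (hA : A.Nonempty) (hB : B.Nonempty) (hC : C.Nonempty)
    (hCcomp : WeaklyKCompact K C)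
    (hBopen : IsOpen B) (hBconv : Convex ℝ B)
    (h : ¬ A ⊆ B + K) :
    ¬ A + C ⊆ C + B + K := by
  intro hcontra
  classical
  have h0K : (0 : X) ∈ K := by
    have : (0 : X) ∈ K ∩ (-K) := hK_pointed ▸ mem_singleton 0
    exact this.1
  obtain ⟨a, haA, haBK⟩ := not_subset.mp h
  have hBKopen : IsOpen (B + K) := hBopen.add_right
  have hBKconv : Convex ℝ (B + K) := hBconv.add hK_conv
  obtain ⟨b₀, hb₀⟩ := hB
  obtain ⟨f, hf⟩ := geometric_hahn_banach_open_point hBKconv hBKopen haBK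
  -- f ≤ 0 on K
  have hfK : ∀ k ∈ K, f k ≤ 0 := by
    intro k hk
    by_contra hpos
    push_neg at hpos
    set t : ℝ := (f a - f b₀) / f k with ht
    have hfb₀ : f b₀ < f a := hf b₀ ⟨b₀, hb₀, 0, h0K, by simp⟩
    have ht0 : 0 ≤ t := le_of_lt (div_pos (sub_pos.mpr hfb₀) hpos)
    have hmem : b₀ + t • k ∈ B + K := ⟨b₀, hb₀, t • k, hK_cone t ht0 k hk, rfl⟩
    have := hf _ hmem
    rw [map_add, map_smul, smul_eq_mul, ht, div_mul_cancel₀ _ (ne_of_gt hpos)] at this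
    linarith
  -- successor function
  have hsucc : ∀ c : X, ∃ c', c ∈ C → c' ∈ C ∧ f c < f c' := by
    intro c
    by_cases hc : c ∈ C
    · have : a + c ∈ C + B + K := hcontra (add_mem_add haA hc)
      obtain ⟨cb, hcb, k, hk, heq⟩ := this
      obtain ⟨c', hc', b, hb', heq2⟩ := hcb
      refine ⟨c', fun _ => ⟨hc', ?_⟩⟩
      have hbk : f (b + k) < f a := hf _ ⟨b, hb', k, hk, rfl⟩
      rw [map_add] at hbk
      subst heq2
      have h5 : f c' + f b + f k = f a + f c := by
        have := congrArg f heq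
        simpa [map_add] using this
      linarith
    · exact ⟨c, fun h => absurd h hc⟩
  choose g hg using hsucc
  set P : ℝ → Prop := fun r => ∃ c ∈ C, f (g c) = r with hP
  set U : ULift.{u_2} ℝ → Set X := fun r => if P r.down then {x : X | f x < r.down} else ∅
    with hUdef
  have hUopen : ∀ r, WeaklyOpen (U r) := by
    intro r
    by_cases hp : P r.down
    · simpa [hUdef, hp] using weaklyOpen_lt f r.down
    · simpa [hUdef, hp] using weaklyOpen_empty (X := X)
  have hcover : C ⊆ ⋃ r, (U r + K) := by
    intro c hc
    refine mem_iUnion.mpr ⟨⟨f (g c)⟩, ⟨c, ?_, 0, h0K, by simp⟩⟩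
    have hp : P (f (g c)) := ⟨c, hc, rfl⟩
    simp only [hUdef, if_pos hp]
    exact (hg c hc).2
  obtain ⟨T, hT⟩ := hCcomp U hUopen hcover
  -- extract membership info
  have hmemU : ∀ x ∈ C, ∃ r ∈ T, P r.down ∧ ∃ u k, f u < r.down ∧ k ∈ K ∧ u + k = x := by
    intro x hx
    have := hT hx
    rw [mem_iUnion₂] at this
    obtain ⟨r, hrT, u, hu, k, hk, heq⟩ := this
    by_cases hp : P r.down
    · rw [hUdef] at hu; simp only [if_pos hp] at hu
      exact ⟨r, hrT, hp, u, k, hu, hk, heq⟩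
    · rw [hUdef] at hu; simp only [if_neg hp] at hu
      exact absurd hu (notMem_empty u)
  -- the filtered finset of "active" indices
  set T' : Finset (ULift.{u_2} ℝ) := T.filter (fun r => P r.down) with hT'
  have hT'ne : T'.Nonempty := by
    obtain ⟨c, hc⟩ := hC
    obtain ⟨r, hrT, hp, _⟩ := hmemU c hc
    exact ⟨r, Finset.mem_filter.mpr ⟨hrT, hp⟩⟩
  obtain ⟨r₀, hr₀, hmax⟩ := T'.exists_max_image (fun r => r.down) hT'ne
  have hp₀ : P r₀.down := (Finset.mem_filter.mp hr₀).2
  obtain ⟨c₀, hc₀C, hc₀⟩ := hp₀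
  -- g c₀ ∈ C, covered
  have hgc₀C : g c₀ ∈ C := (hg c₀ hc₀C).1
  obtain ⟨r, hrT, hp, u, k, hu, hk, heq⟩ := hmemU (g c₀) hgc₀C
  have hrT' : r ∈ T' := Finset.mem_filter.mpr ⟨hrT, hp⟩
  have h1 : f (g c₀) = f u + f k := by rw [← heq, map_add]
  have h2 : r.down ≤ r₀.down := hmax r hrT'
  have h4 : f k ≤ 0 := hfK k hk
  rw [hc₀] at h1
  linarith
end

section
/- Let X be a real normed vector space and K ⊆ X a closed, convex, pointed cone with nonempty interior, and fix e ∈ int K. If A ⊆ X is nonempty and weakly K-compact, then the Gerstewitz functional φ(x) = inf{t ∈ ℝ : x ∈ te − K} attains its minimum on A, i.e., there exists ā ∈ A with φ(ā) ≤ φ(a) for all a ∈ A. -/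
open Set Filter Topology Metric Pointwise

/-- The Gerstewitz (Tammer) scalarizing functional `φ(x) = inf {t : x ∈ t • e - K}`. -/
noncomputable def gerstewitz {X : Type*} [NormedAddCommGroup X] [NormedSpace ℝ X]
    (K : Set X) (e : X) (x : X) : ℝ := sInf {t : ℝ | t • e - x ∈ K}

/-!
If `-e ∈ K`, then `t • e - x ∈ K` for all `t`, so `φ` is constantly the junk value
`sInf univ = 0`. Otherwise `{t | t • e - x ∈ K}` is the closed half-line `[φ x, ∞)`, i.e.
`φ x ≤ c ↔ c • e - x ∈ K`. Hence `φ` is monotone along `K`, and `{x | c < φ x}` equals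
`{x | c • e - x ∉ K}`, which is weakly open since the closed convex set `K` is weakly closed.
If `φ` had no minimum on `A`, the sets `{x | φ a < φ x} + K`, `a ∈ A`, would cover `A`; by
monotonicity, the index `a` of a finite subcover with least `φ a` lies in none of its members.
-/

theorem tendsto_sub_smul_nhdsGT_zero {X : Type*} [AddCommGroup X] [Module ℝ X] [TopologicalSpace X]
    [IsTopologicalAddGroup X] [ContinuousSMul ℝ X] (v x : X) :
    Tendsto (fun s : ℝ => v - s • x) (𝓝[>] 0) (𝓝 v) := by
  have : Tendsto (fun s : ℝ => v - s • x) (𝓝 0) (𝓝 (v - (0 : ℝ) • x)) :=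
    (continuous_const.sub (continuous_id.smul continuous_const)).tendsto 0
  simpa using this.mono_left nhdsWithin_le_nhds

section ScalarizingSet

variable {X : Type*} [AddCommGroup X] [Module ℝ X] {K : Set X} {e x : X}

theorem smul_sub_mem_of_sub_smul_mem (hK_add : K + K ⊆ K) {s t : ℝ} (ht : t • e - x ∈ K)
    (hst : (s - t) • e ∈ K) : s • e - x ∈ K := by
  have := hK_add (add_mem_add hst ht)
  rwa [sub_smul, sub_add_sub_cancel] at this

theorem smul_sub_mem_of_le (hK_cone : ∀ t : ℝ, 0 ≤ t → ∀ x ∈ K, t • x ∈ K)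
    (hK_add : K + K ⊆ K) (heK : e ∈ K) {s t : ℝ} (ht : t • e - x ∈ K) (hts : t ≤ s) :
    s • e - x ∈ K :=
  smul_sub_mem_of_sub_smul_mem hK_add ht (hK_cone _ (sub_nonneg.2 hts) e heK)

theorem smul_mem_of_mem_of_neg_mem (hK_cone : ∀ t : ℝ, 0 ≤ t → ∀ x ∈ K, t • x ∈ K)
    (heK : e ∈ K) (hneg : -e ∈ K) (r : ℝ) : r • e ∈ K := by
  rcases le_total 0 r with hr | hr
  · exact hK_cone r hr e heK
  · simpa using hK_cone (-r) (neg_nonneg.2 hr) (-e) hneg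

variable [TopologicalSpace X] [IsTopologicalAddGroup X] [ContinuousSMul ℝ X]

theorem isClosed_setOf_smul_sub_mem (hK_closed : IsClosed K) (e x : X) :
    IsClosed {t : ℝ | t • e - x ∈ K} :=
  hK_closed.preimage (by fun_prop)

theorem exists_smul_sub_mem_of_mem_interior (hK_cone : ∀ t : ℝ, 0 ≤ t → ∀ x ∈ K, t • x ∈ K)
    (he : e ∈ interior K) (x : X) : ∃ t : ℝ, t • e - x ∈ K := by
  obtain ⟨s, hs, hs0⟩ := (((tendsto_sub_smul_nhdsGT_zero e x).eventually
    (mem_interior_iff_mem_nhds.1 he)).and self_mem_nhdsWithin).exists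
  have hs0 : 0 < s := hs0
  refine ⟨s⁻¹, ?_⟩
  simpa [smul_sub, smul_smul, inv_mul_cancel₀ hs0.ne'] using hK_cone s⁻¹ (inv_nonneg.2 hs0.le) _ hs

theorem bddBelow_setOf_smul_sub_mem (hK_closed : IsClosed K)
    (hK_cone : ∀ t : ℝ, 0 ≤ t → ∀ x ∈ K, t • x ∈ K) (hK_add : K + K ⊆ K) (heK : e ∈ K)
    (hneg : -e ∉ K) (x : X) : BddBelow {t : ℝ | t • e - x ∈ K} := by
  by_contra hunb
  have hall : ∀ t : ℝ, t • e - x ∈ K := fun t => by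
    obtain ⟨s, hs, hst⟩ := not_bddBelow_iff.1 hunb t
    exact smul_sub_mem_of_le hK_cone hK_add heK hs hst.le
  -- scaling `(-s⁻¹) • e - x ∈ K` by `s > 0` gives `-e - s • x ∈ K`, and these tend to `-e`
  refine hneg (hK_closed.mem_of_tendsto (tendsto_sub_smul_nhdsGT_zero (-e) x) ?_)
  filter_upwards [self_mem_nhdsWithin] with s (hs : 0 < s)
  simpa [smul_sub, smul_smul, hs.ne'] using hK_cone s hs.le _ (hall (-s⁻¹))

end ScalarizingSet

section Gerstewitz

variable {X : Type*} [NormedAddCommGroup X] [NormedSpace ℝ X] {K : Set X} {e : X}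

theorem gerstewitz_eq_zero_of_neg_mem (hK_cone : ∀ t : ℝ, 0 ≤ t → ∀ x ∈ K, t • x ∈ K)
    (hK_add : K + K ⊆ K) (he : e ∈ interior K) (hneg : -e ∈ K) (x : X) :
    gerstewitz K e x = 0 := by
  obtain ⟨s, hs⟩ := exists_smul_sub_mem_of_mem_interior hK_cone he x
  have huniv : {t : ℝ | t • e - x ∈ K} = univ := eq_univ_of_forall fun t =>
    smul_sub_mem_of_sub_smul_mem hK_add hs
      (smul_mem_of_mem_of_neg_mem hK_cone (interior_subset he) hneg _)
  rw [gerstewitz, huniv, Real.sInf_univ]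

theorem gerstewitz_le_iff (hK_closed : IsClosed K)
    (hK_cone : ∀ t : ℝ, 0 ≤ t → ∀ x ∈ K, t • x ∈ K) (hK_add : K + K ⊆ K)
    (he : e ∈ interior K) (hneg : -e ∉ K) {x : X} {c : ℝ} :
    gerstewitz K e x ≤ c ↔ c • e - x ∈ K := by
  have hbdd := bddBelow_setOf_smul_sub_mem hK_closed hK_cone hK_add (interior_subset he) hneg x
  have hmin : gerstewitz K e x • e - x ∈ K :=
    (isClosed_setOf_smul_sub_mem hK_closed e x).csInf_mem
      (exists_smul_sub_mem_of_mem_interior hK_cone he x) hbdd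
  exact ⟨smul_sub_mem_of_le hK_cone hK_add (interior_subset he) hmin, fun h => csInf_le hbdd h⟩

theorem gerstewitz_le_gerstewitz_add (hK_closed : IsClosed K)
    (hK_cone : ∀ t : ℝ, 0 ≤ t → ∀ x ∈ K, t • x ∈ K) (hK_add : K + K ⊆ K)
    (he : e ∈ interior K) (hneg : -e ∉ K) (x : X) {k : X} (hk : k ∈ K) :
    gerstewitz K e x ≤ gerstewitz K e (x + k) := by
  have hxk := (gerstewitz_le_iff hK_closed hK_cone hK_add he hneg (x := x + k)).1 le_rfl
  have := hK_add (add_mem_add hxk hk)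
  rwa [sub_add_eq_sub_sub, sub_add_cancel, ← gerstewitz_le_iff hK_closed hK_cone hK_add he hneg]
    at this

theorem weaklyOpen_setOf_sub_notMem (hK_closed : IsClosed K) (hK_conv : Convex ℝ K) (v : X) :
    WeaklyOpen {x : X | v - x ∉ K} := by
  set Φ := toWeakSpace ℝ X
  have hKw : IsClosed (Φ '' K) := by
    rw [← hK_closed.closure_eq, hK_conv.toWeakSpace_closure ℝ]
    exact isClosed_closure
  have himage : Φ '' {x : X | v - x ∉ K} = (fun y => Φ v - y) ⁻¹' (Φ '' K)ᶜ := by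
    ext y
    obtain ⟨x, rfl⟩ := Φ.surjective y
    simp [Φ.injective.mem_set_image, ← map_sub]
  rw [WeaklyOpen, himage]
  exact hKw.isOpen_compl.preimage (continuous_const.sub continuous_id)

theorem weaklyOpen_setOf_lt_gerstewitz (hK_closed : IsClosed K) (hK_conv : Convex ℝ K)
    (hK_cone : ∀ t : ℝ, 0 ≤ t → ∀ x ∈ K, t • x ∈ K) (hK_add : K + K ⊆ K)
    (he : e ∈ interior K) (hneg : -e ∉ K) (c : ℝ) :
    WeaklyOpen {x : X | c < gerstewitz K e x} := by
  simpa only [← not_le, gerstewitz_le_iff hK_closed hK_cone hK_add he hneg]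
    using weaklyOpen_setOf_sub_notMem hK_closed hK_conv (c • e)

end Gerstewitz

theorem WeaklyKCompact.exists_isMinOn {X : Type*} [NormedAddCommGroup X] [NormedSpace ℝ X]
    {K A : Set X} (hA : WeaklyKCompact K A) (hne : A.Nonempty) (h0 : (0 : X) ∈ K) {f : X → ℝ}
    (hmono : ∀ x, ∀ k ∈ K, f x ≤ f (x + k)) (hf : ∀ c, WeaklyOpen {x | c < f x}) :
    ∃ a ∈ A, IsMinOn f A a := by
  by_contra! hmin
  have hlower : ∀ b ∈ A, ∃ a ∈ A, f a < f b := fun b hb => by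
    simpa [isMinOn_iff] using hmin b hb
  -- index the cover by attained values, lifted to the universe that `hA` quantifies over
  obtain ⟨t, ht⟩ := hA (fun c : ULift (f '' A) => {x | c.down.1 < f x}) (fun c => hf _) <| by
    intro b hb
    obtain ⟨a, ha, hab⟩ := hlower b hb
    exact mem_iUnion.2 ⟨⟨⟨f a, a, ha, rfl⟩⟩, b, hab, 0, h0, add_zero b⟩
  have htne : t.Nonempty := by
    obtain ⟨i, hi, -⟩ := mem_iUnion₂.1 (ht hne.some_mem)
    exact ⟨i, hi⟩
  obtain ⟨j, -, hjmin⟩ := t.exists_min_image (fun c => c.down.1) htne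
  obtain ⟨a, ha, hfa⟩ := j.down.2
  obtain ⟨i, hi, u, hu, k, hk, rfl⟩ := mem_iUnion₂.1 (ht ha)
  have : (i.down : ℝ) < i.down := calc
    (i.down : ℝ) < f u := hu
    _ ≤ f (u + k) := hmono u k hk
    _ = j.down := hfa
    _ ≤ i.down := hjmin i hi
  exact lt_irrefl _ this

theorem gerstewitz_attains_min_general {X : Type*} [NormedAddCommGroup X] [NormedSpace ℝ X]
    (K : Set X)
    (hK_closed : IsClosed K) (hK_conv : Convex ℝ K)
    (hK_cone : ∀ t : ℝ, 0 ≤ t → ∀ x ∈ K, t • x ∈ K)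
    (hK_add : K + K ⊆ K)
    (e : X) (he : e ∈ interior K)
    (A : Set X) (hA : A.Nonempty) (hAcomp : WeaklyKCompact K A) :
    ∃ abar ∈ A, ∀ a ∈ A, gerstewitz K e abar ≤ gerstewitz K e a := by
  by_cases hneg : -e ∈ K
  · obtain ⟨a, ha⟩ := hA
    refine ⟨a, ha, fun b _ => ?_⟩
    rw [gerstewitz_eq_zero_of_neg_mem hK_cone hK_add he hneg,
      gerstewitz_eq_zero_of_neg_mem hK_cone hK_add he hneg]
  · have h0 : (0 : X) ∈ K := by simpa using hK_cone 0 le_rfl e (interior_subset he)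
    obtain ⟨a, ha, hmin⟩ := hAcomp.exists_isMinOn hA h0
      (fun x _ hk => gerstewitz_le_gerstewitz_add hK_closed hK_cone hK_add he hneg x hk)
      (weaklyOpen_setOf_lt_gerstewitz hK_closed hK_conv hK_cone hK_add he hneg)
    exact ⟨a, ha, isMinOn_iff.1 hmin⟩

/-- The Gerstewitz functional attains its minimum on a weakly `K`-compact set (Lemma 12). -/
theorem gerstewitz_attains_min {X : Type*} [NormedAddCommGroup X] [NormedSpace ℝ X]
    (K : Set X)
    (hK_closed : IsClosed K) (hK_conv : Convex ℝ K)
    (hK_cone : ∀ t : ℝ, 0 ≤ t → ∀ x ∈ K, t • x ∈ K)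
    (hK_add : K + K ⊆ K) (hK_pointed : K ∩ (-K) = {0})
    (e : X) (he : e ∈ interior K)
    (A : Set X) (hA : A.Nonempty) (hAcomp : WeaklyKCompact K A) :
    ∃ abar ∈ A, ∀ a ∈ A, gerstewitz K e abar ≤ gerstewitz K e a :=
  gerstewitz_attains_min_general K hK_closed hK_conv hK_cone hK_add e he A hA hAcomp
end

section
/- Let X be a real normed vector space and K ⊆ X a closed, convex, pointed cone with nonempty interior. Suppose A, B ⊆ X are nonempty sets, B is K-compact, and fix e ∈ int K. If A ⊄ B + K, then there exists ρ > 0 such that for every nonempty weakly K-compact set C ⊆ X satisfying C ⊆ (ρe − K) ∩ (−ρe + K), one has A + C ⊄ C + B + K. -/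
open Set Filter Topology Metric Pointwise

/-- `S` is `K`-compact: every cover of `S` by sets `U + K` with `U` norm-open
admits a finite subcover. -/
def KCompactSet {X : Type*} [NormedAddCommGroup X] (K S : Set X) : Prop :=
  ∀ {ι : Type*} (U : ι → Set X), (∀ i, IsOpen (U i)) → S ⊆ ⋃ i, (U i + K) →
    ∃ t : Finset ι, S ⊆ ⋃ i ∈ t, (U i + K)

/-- If `B` is `K`-compact and `K` is a closed additive cone containing `0`,
then `B + K` is closed. -/
lemma myClosedAdd {X : Type*} [NormedAddCommGroup X] (K B : Set X)
    (hK_closed : IsClosed K) (h0 : (0:X) ∈ K) (hK_add : K + K ⊆ K)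
    (hB : KCompactSet K B) : IsClosed (B + K) := by
  rw [← isOpen_compl_iff, Metric.isOpen_iff]
  intro x hx
  have hKne : K.Nonempty := ⟨0, h0⟩
  have hf : Continuous (fun z : X => Metric.infDist (x - z) K) := by
    exact (Metric.continuous_infDist_pt K).comp (continuous_const.sub continuous_id)
  set U : ULift ℕ → Set X :=
    fun n => {z : X | 1 / ((n.down : ℝ) + 1) < Metric.infDist (x - z) K} with hU
  have hUopen : ∀ n, IsOpen (U n) := by
    intro n
    have : U n = (fun z : X => Metric.infDist (x - z) K) ⁻¹' Set.Ioi (1 / ((n.down : ℝ) + 1)) := rfl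
    rw [this]
    exact isOpen_Ioi.preimage hf
  have hcov : B ⊆ ⋃ n, (U n + K) := by
    intro b hb
    have hxb : x - b ∉ K := by
      intro hk
      exact hx (by simpa using Set.add_mem_add hb hk)
    have hpos : 0 < Metric.infDist (x - b) K :=
      ((hK_closed.notMem_iff_infDist_pos hKne).mp hxb)
    obtain ⟨n, hn⟩ := exists_nat_one_div_lt hpos
    refine Set.mem_iUnion.mpr ⟨⟨n⟩, ?_⟩
    have hbU : b ∈ U ⟨n⟩ := by
      simpa [hU] using hn
    simpa using Set.add_mem_add hbU h0
  obtain ⟨t, ht⟩ := hB U hUopen hcov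
  set N : ℕ := t.sup (fun n => n.down) with hN
  refine ⟨1 / ((N : ℝ) + 1), by positivity, ?_⟩
  intro z hz hzBK
  obtain ⟨b0, hb0, k, hk, hzk⟩ := hzBK
  obtain ⟨i, hit, hmem⟩ := Set.mem_iUnion₂.mp (ht hb0)
  obtain ⟨u, hu, k', hk', hb0eq⟩ := hmem
  have hzK : z - u ∈ K := by
    have hkk : k' + k ∈ K := hK_add ⟨k', hk', k, hk, rfl⟩
    have hzeq : z - u = k' + k := by rw [← hzk, ← hb0eq]; beta_reduce; abel
    rwa [hzeq]
  have h1 : Metric.infDist (x - u) K ≤ dist (x - u) (z - u) :=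
    Metric.infDist_le_dist_of_mem hzK
  have h2 : dist (x - u) (z - u) = dist x z := dist_sub_right x z u
  have h3 : dist x z < 1 / ((N : ℝ) + 1) := by
    rw [dist_comm]
    exact Metric.mem_ball.mp hz
  have h4 : (1 : ℝ) / ((N : ℝ) + 1) ≤ 1 / ((i.down : ℝ) + 1) := by
    have : (i.down : ℝ) ≤ (N : ℝ) := by
      exact_mod_cast Finset.le_sup (f := fun n : ULift ℕ => n.down) hit
    apply one_div_le_one_div_of_le <;> linarith [Nat.cast_nonneg (α := ℝ) i.down]
  have h5 : 1 / ((i.down : ℝ) + 1) < Metric.infDist (x - u) K := hu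
  linarith

/-- Nonconvex conic cancellation (Proposition 13). -/
theorem conic_cancellation_nonconvex {X : Type*} [NormedAddCommGroup X] [NormedSpace ℝ X]
    (K A B : Set X)
    (hK_closed : IsClosed K) (hK_conv : Convex ℝ K)
    (hK_cone : ∀ t : ℝ, 0 ≤ t → ∀ x ∈ K, t • x ∈ K)
    (hK_add : K + K ⊆ K) (hK_pointed : K ∩ (-K) = {0})
    (hA : A.Nonempty) (hB : B.Nonempty)
    (hBcomp : KCompactSet K B)
    (e : X) (he : e ∈ interior K)
    (h : ¬ A ⊆ B + K) :
    ∃ ρ : ℝ, 0 < ρ ∧ ∀ C : Set X, C.Nonempty → WeaklyKCompact K C →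
      C ⊆ ({ρ • e} + -K) ∩ ({-(ρ • e)} + K) → ¬ A + C ⊆ C + B + K := by
  have heK : e ∈ K := interior_subset he
  have h0 : (0:X) ∈ K := by simpa using hK_cone 0 le_rfl e heK
  obtain ⟨a, ha, hanot⟩ := Set.not_subset.mp h
  have hclosed := myClosedAdd K B hK_closed h0 hK_add hBcomp
  obtain ⟨δ, hδ, hball⟩ := Metric.isOpen_iff.mp hclosed.isOpen_compl a hanot
  set ρ : ℝ := δ / (2 * ‖e‖ + 2) with hρdef
  have hρpos : 0 < ρ := div_pos hδ (by positivity)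
  refine ⟨ρ, hρpos, ?_⟩
  intro C hCne _ hCsub hcontra
  obtain ⟨c, hc⟩ := hCne
  have hac : a + c ∈ C + (B + K) := by
    rw [← add_assoc]
    exact hcontra (Set.add_mem_add ha hc)
  obtain ⟨c', hc', y, hy, heq⟩ := hac
  obtain ⟨x1, hx1, y1, hy1, hc1⟩ := (hCsub hc).1
  obtain ⟨x2, hx2, y2, hy2, hc2⟩ := (hCsub hc').2
  rw [Set.mem_singleton_iff] at hx1 hx2
  subst hx1; subst hx2
  have hy1' : -y1 ∈ K := by rwa [Set.mem_neg] at hy1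
  have hkey : a + (2 * ρ) • e = y + (y2 + -y1) := by
    have hc1' : ρ • e + y1 = c := hc1
    have hc2' : -(ρ • e) + y2 = c' := hc2
    have heq' : c' + y = a + c := heq
    rw [← hc1', ← hc2'] at heq'
    have ha2 : a = (-(ρ • e) + y2) + y - (ρ • e + y1) := by
      rw [heq']; abel
    rw [ha2, two_mul, add_smul]; abel
  have hmem : a + (2 * ρ) • e ∈ B + K := by
    have hk2 : y2 + -y1 ∈ K := hK_add ⟨y2, hy2, -y1, hy1', rfl⟩
    have hBKK : (B + K) + K ⊆ B + K := by
      rw [add_assoc]; exact Set.add_subset_add_left hK_add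
    rw [hkey]
    exact hBKK ⟨y, hy, y2 + -y1, hk2, rfl⟩
  have hdist : a + (2 * ρ) • e ∈ Metric.ball a δ := by
    rw [Metric.mem_ball, dist_eq_norm, add_sub_cancel_left, norm_smul,
      Real.norm_eq_abs, abs_of_pos (by linarith)]
    have hne : 2 * ‖e‖ + 2 ≠ 0 := by positivity
    have hρδ : ρ * (2 * ‖e‖ + 2) = δ := div_mul_cancel₀ _ hne
    nlinarith [norm_nonneg e, hρpos]
  exact hball hdist hmem
end

section
/- Let X be a real normed vector space and K ⊆ X a closed, convex, pointed cone. If A ⊆ X is nonempty and K-bounded and B ⊆ X is nonempty, then the excess e(A + K, B + K) is finite; moreover, e(A, B + K) = e(A + K, B + K) = e(A, cl(B + K)) = e(A, cl B + K) = e(cl A + K, cl B + K). -/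
open Set Filter Topology Metric Pointwise
open scoped ENNReal

/-- The excess `e(A, B) = sup_{x ∈ A} d(x, B)`, valued in `[0, ∞]`. -/
noncomputable def excess {Y : Type*} [SeminormedAddCommGroup Y] (A B : Set Y) : ℝ≥0∞ :=
  ⨆ x ∈ A, EMetric.infEdist x B

/-- Finiteness and invariance properties of the excess (Remark 21). -/
theorem excess_finite_and_invariance {X : Type*} [NormedAddCommGroup X] [NormedSpace ℝ X]
    (K A B : Set X)
    (hK_closed : IsClosed K) (hK_conv : Convex ℝ K)
    (hK_cone : ∀ t : ℝ, 0 ≤ t → ∀ x ∈ K, t • x ∈ K)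
    (hK_add : K + K ⊆ K) (hK_pointed : K ∩ (-K) = {0})
    (hA : A.Nonempty) (hB : B.Nonempty)
    (hAbd : KBounded K A) :
    excess (A + K) (B + K) ≠ ⊤ ∧
    excess A (B + K) = excess (A + K) (B + K) ∧
    excess A (B + K) = excess A (closure (B + K)) ∧
    excess A (B + K) = excess A (closure B + K) ∧
    excess A (B + K) = excess (closure A + K) (closure B + K) := by
  have h0K : (0 : X) ∈ K := by
    have h : (0 : X) ∈ ({0} : Set X) := rfl
    rw [← hK_pointed] at h
    exact h.1
  have hsub : ∀ S : Set X, S ⊆ S + K := by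
    intro S x hx
    exact ⟨x, hx, 0, h0K, add_zero x⟩
  -- translation by k ∈ K doesn't increase infEdist to S + K
  have hshift : ∀ (x k : X), k ∈ K → ∀ S : Set X,
      EMetric.infEdist (x + k) (S + K) ≤ EMetric.infEdist x (S + K) := by
    intro x k hk S
    have hiso : Isometry (fun y : X => y + k) :=
      Isometry.of_dist_eq fun a b => dist_add_right a b k
    have himg : (fun y : X => y + k) '' (S + K) ⊆ S + K := by
      rintro _ ⟨y, hy, rfl⟩
      obtain ⟨s, hs, k', hk', rfl⟩ := Set.mem_add.mp hy
      exact ⟨s, hs, k' + k, hK_add ⟨k', hk', k, hk, rfl⟩, (add_assoc s k' k).symm⟩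
    calc EMetric.infEdist (x + k) (S + K)
        ≤ EMetric.infEdist (x + k) ((fun y : X => y + k) '' (S + K)) :=
          EMetric.infEdist_anti himg
      _ = EMetric.infEdist x (S + K) := EMetric.infEdist_image hiso
  -- pointwise: infEdist to closure B + K equals infEdist to B + K
  have hBK1 : B + K ⊆ closure B + K :=
    Set.add_subset_add_right subset_closure
  have hBK2 : closure B + K ⊆ closure (B + K) := by
    rintro x hx
    obtain ⟨b, hb, k, hk, rfl⟩ := Set.mem_add.mp hx
    exact map_mem_closure (f := fun y : X => y + k) (continuous_add_right k) hb
      (fun y hy => ⟨y, hy, k, hk, rfl⟩)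
  have hpt : ∀ x : X, EMetric.infEdist x (closure B + K) = EMetric.infEdist x (B + K) := by
    intro x
    refine le_antisymm (EMetric.infEdist_anti hBK1) ?_
    calc EMetric.infEdist x (B + K)
        = EMetric.infEdist x (closure (B + K)) := (EMetric.infEdist_closure).symm
      _ ≤ EMetric.infEdist x (closure B + K) := EMetric.infEdist_anti hBK2
  set e0 := excess A (B + K) with he0
  -- sublevel set argument for closure of A
  have hclA : ∀ x ∈ closure A, EMetric.infEdist x (B + K) ≤ e0 := by
    intro x hx
    have hcl : IsClosed {y : X | EMetric.infEdist y (B + K) ≤ e0} :=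
      isClosed_le EMetric.continuous_infEdist continuous_const
    refine hcl.closure_subset_iff.mpr ?_ hx
    intro a ha
    exact le_iSup₂ (f := fun x (_ : x ∈ A) => EMetric.infEdist x (B + K)) a ha
  -- equality 1
  have heq1 : e0 = excess (A + K) (B + K) := by
    refine le_antisymm ?_ ?_
    · exact iSup₂_le fun a ha => le_iSup₂
        (f := fun x (_ : x ∈ A + K) => EMetric.infEdist x (B + K)) a (hsub A ha)
    · refine iSup₂_le fun x hx => ?_
      obtain ⟨a, ha, k, hk, rfl⟩ := Set.mem_add.mp hx
      exact le_trans (hshift a k hk B)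
        (le_iSup₂ (f := fun x (_ : x ∈ A) => EMetric.infEdist x (B + K)) a ha)
  -- equality 2
  have heq2 : e0 = excess A (closure (B + K)) := by
    unfold excess
    exact iSup_congr fun x => iSup_congr fun _ => (EMetric.infEdist_closure).symm
  -- equality 3
  have heq3 : e0 = excess A (closure B + K) := by
    unfold excess
    exact iSup_congr fun x => iSup_congr fun _ => (hpt x).symm
  -- equality 4
  have heq4 : e0 = excess (closure A + K) (closure B + K) := by
    have : excess (closure A + K) (closure B + K) = excess (closure A + K) (B + K) := by
      unfold excess
      exact iSup_congr fun x => iSup_congr fun _ => hpt x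
    rw [this]
    refine le_antisymm ?_ ?_
    · refine iSup₂_le fun a ha => ?_
      have haK : a ∈ closure A + K := ⟨a, subset_closure ha, 0, h0K, add_zero a⟩
      exact le_iSup₂ (f := fun x (_ : x ∈ closure A + K) => EMetric.infEdist x (B + K)) a haK
    · refine iSup₂_le fun x hx => ?_
      obtain ⟨a, ha, k, hk, rfl⟩ := Set.mem_add.mp hx
      exact le_trans (hshift a k hk B) (hclA a ha)
  -- finiteness
  have hfin : e0 ≠ ⊤ := by
    obtain ⟨M, hMbd, hAM⟩ := hAbd
    obtain ⟨C, hC⟩ := hMbd.exists_norm_le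
    obtain ⟨b, hb⟩ := hB
    have hbound : e0 ≤ ENNReal.ofReal (C + ‖b‖) := by
      refine iSup₂_le fun a ha => ?_
      obtain ⟨m, hm, k, hk, rfl⟩ := Set.mem_add.mp (hAM ha)
      have hbk : b + k ∈ B + K := ⟨b, hb, k, hk, rfl⟩
      calc EMetric.infEdist (m + k) (B + K)
          ≤ edist (m + k) (b + k) := EMetric.infEdist_le_edist_of_mem hbk
        _ = edist m b := edist_add_right m b k
        _ = ENNReal.ofReal (dist m b) := edist_dist m b
        _ ≤ ENNReal.ofReal (C + ‖b‖) := by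
            refine ENNReal.ofReal_le_ofReal ?_
            calc dist m b ≤ ‖m‖ + ‖b‖ := dist_le_norm_add_norm m b
              _ ≤ C + ‖b‖ := add_le_add_left (hC m hm) _
    exact ne_top_of_le_ne_top ENNReal.ofReal_ne_top hbound
  exact ⟨heq1 ▸ hfin, heq1, heq2, heq3, heq4⟩
end

section
/- Let X be a real normed vector space and K ⊆ X a closed, convex, pointed cone. Suppose A, B, C ⊆ X are nonempty sets, C is weakly K-compact, and cl B is K-convex (i.e., cl B + K is convex). Then e(A, B + K) = e(A + C, B + K + C). -/
open Set Filter Topology Metric Pointwise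
open scoped ENNReal

universe u v

/-- Strict sublevel sets `{x | c < f x}` of continuous functionals are weakly open. -/
lemma weaklyOpen_gt {X : Type*} [NormedAddCommGroup X] [NormedSpace ℝ X]
    (f : X →L[ℝ] ℝ) (c : ℝ) : WeaklyOpen {x : X | c < f x} := by
  unfold WeaklyOpen
  have h1 : (toWeakSpace ℝ X) '' {x : X | c < f x}
      = (fun w : WeakSpace ℝ X => f ((toWeakSpace ℝ X).symm w)) ⁻¹' Set.Ioi c := by
    ext w
    constructor
    · rintro ⟨x, hx, rfl⟩
      simpa using hx
    · intro hw
      exact ⟨(toWeakSpace ℝ X).symm w, hw, by simp⟩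
  rw [h1]
  exact isOpen_Ioi.preimage (WeakBilin.eval_continuous _ f)

/-- Rådström-type cancellation: if `E` is open convex, `E + K ⊆ E`, `C` admits finite
subcovers from covers `U + K` indexed by `ULift ℝ`, and `a + C ⊆ E + C`, then `a ∈ E`. -/
lemma mem_of_add_subset_add {X : Type u} [NormedAddCommGroup X] [NormedSpace ℝ X]
    (K C E : Set X) (hK0 : (0 : X) ∈ K)
    (hK_cone : ∀ t : ℝ, 0 ≤ t → ∀ x ∈ K, t • x ∈ K)
    (hCcomp : ∀ U : ULift.{v} ℝ → Set X, (∀ i, WeaklyOpen (U i)) → C ⊆ ⋃ i, (U i + K) →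
      ∃ t : Finset (ULift.{v} ℝ), C ⊆ ⋃ i ∈ t, (U i + K))
    (hCne : C.Nonempty)
    (hEconv : Convex ℝ E) (hEopen : IsOpen E)
    (hEK : ∀ e ∈ E, ∀ k ∈ K, e + k ∈ E)
    (a : X) (h : ∀ c ∈ C, ∃ e ∈ E, ∃ c' ∈ C, a + c = e + c') :
    a ∈ E := by
  classical
  by_contra ha
  obtain ⟨c₀, hc₀⟩ := hCne
  obtain ⟨e₀, he₀, -⟩ := h c₀ hc₀
  obtain ⟨f, hf⟩ := geometric_hahn_banach_point_open hEconv hEopen ha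
  -- `f` is nonnegative on `K`
  have fK : ∀ k ∈ K, 0 ≤ f k := by
    intro k hk
    by_contra hneg
    push_neg at hneg
    have hk0 : f k ≠ 0 := ne_of_lt hneg
    set t : ℝ := (f e₀ - f a) / (-(f k)) with ht
    have htpos : 0 < t := div_pos (by linarith [hf e₀ he₀]) (by linarith)
    have hmem : e₀ + t • k ∈ E := hEK e₀ he₀ _ (hK_cone t htpos.le k hk)
    have h1 : f a < f (e₀ + t • k) := hf _ hmem
    rw [map_add, map_smul, smul_eq_mul] at h1
    have hcalc : t * f k = f a - f e₀ := by
      rw [ht, div_mul_eq_mul_div, mul_div_assoc, div_neg, div_self hk0]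
      ring
    linarith
  -- `f` has no minimum on `C`
  have nomin : ∀ c ∈ C, ∃ c' ∈ C, f c' < f c := by
    intro c hc
    obtain ⟨e, he, c', hc', heq⟩ := h c hc
    refine ⟨c', hc', ?_⟩
    have h1 : f a < f e := hf e he
    have h2 : f a + f c = f e + f c' := by
      have := congrArg f heq
      simpa [map_add] using this
    linarith
  -- the cover, indexed by thresholds in `ULift ℝ`
  set U : ULift.{v} ℝ → Set X :=
    fun s => if s.down ∈ f '' C then {x | s.down < f x} else ∅ with hUdef
  have hUopen : ∀ s, WeaklyOpen (U s) := by
    intro s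
    simp only [hUdef]
    split_ifs with hs
    · exact weaklyOpen_gt f s.down
    · simpa [WeaklyOpen] using isOpen_empty
  have hcover : C ⊆ ⋃ s, U s + K := by
    intro c hc
    obtain ⟨c', hc', hlt⟩ := nomin c hc
    refine Set.mem_iUnion.2 ⟨⟨f c'⟩, ?_⟩
    have hU' : U ⟨f c'⟩ = {x | f c' < f x} := by
      simp only [hUdef]
      exact if_pos ⟨c', hc', rfl⟩
    rw [hU']
    exact Set.mem_add.2 ⟨c, hlt, 0, hK0, add_zero c⟩
  obtain ⟨t, ht⟩ := hCcomp U hUopen hcover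
  -- each point of `C` is strictly above some threshold in `t` which is an `f`-value on `C`
  have key : ∀ c ∈ C, ∃ s ∈ t, s.down ∈ f '' C ∧ s.down < f c := by
    intro c hc
    have h1 := ht hc
    simp only [Set.mem_iUnion] at h1
    obtain ⟨s, hst, hmem⟩ := h1
    rw [Set.mem_add] at hmem
    obtain ⟨u, hu, k, hk, huk⟩ := hmem
    have hu' : (∃ x ∈ C, f x = s.down) ∧ s.down < f u := by simpa [hUdef] using hu
    refine ⟨s, hst, ?_, ?_⟩
    · obtain ⟨x, hx, hfx⟩ := hu'.1
      exact ⟨x, hx, hfx⟩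
    · have hk' : 0 ≤ f k := fK k hk
      have hc' : f c = f u + f k := by rw [← huk, map_add]
      linarith [hu'.2]
  -- pick the minimal relevant threshold
  set T : Finset (ULift.{v} ℝ) := t.filter (fun s => s.down ∈ f '' C) with hT
  have hTne : T.Nonempty := by
    obtain ⟨s, hst, hs, -⟩ := key c₀ hc₀
    exact ⟨s, Finset.mem_filter.2 ⟨hst, hs⟩⟩
  obtain ⟨sm, hsmT, hsmin⟩ := T.exists_min_image (fun s => s.down) hTne
  obtain ⟨hsmt, hsmC⟩ := Finset.mem_filter.1 hsmT
  obtain ⟨cm, hcm, hfcm⟩ := hsmC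
  obtain ⟨s', hs't, hs'C, hlt'⟩ := key cm hcm
  have hmin : sm.down ≤ s'.down := hsmin s' (Finset.mem_filter.2 ⟨hs't, hs'C⟩)
  rw [hfcm] at hlt'
  linarith

/-- Invariance of the conic excess under addition of a weakly `K`-compact set
(Proposition 22). -/
theorem excess_invariant_weakly_K_compact {X : Type*} [NormedAddCommGroup X] [NormedSpace ℝ X]
    (K A B C : Set X)
    (hK_closed : IsClosed K) (hK_conv : Convex ℝ K)
    (hK_cone : ∀ t : ℝ, 0 ≤ t → ∀ x ∈ K, t • x ∈ K)
    (hK_add : K + K ⊆ K) (hK_pointed : K ∩ (-K) = {0})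
    (hA : A.Nonempty) (hB : B.Nonempty) (hC : C.Nonempty)
    (hCcomp : WeaklyKCompact K C)
    (hBconv : Convex ℝ (closure B + K)) :
    excess A (B + K) = excess (A + C) (B + K + C) := by
  have hK0 : (0 : X) ∈ K := by
    have h0 : (0 : X) ∈ K ∩ (-K) := by
      rw [hK_pointed]; exact rfl
    exact h0.1
  apply le_antisymm
  · -- hard direction: excess A (B+K) ≤ excess (A+C) (B+K+C)
    rw [excess]
    refine iSup₂_le fun a haA => ?_
    apply ENNReal.le_of_forall_pos_le_add
    intro ε hε hfin
    set r := excess (A + C) (B + K + C) with hr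
    have hρfin : r + (ε : ℝ≥0∞) ≠ ⊤ := ENNReal.add_ne_top.2 ⟨hfin.ne, ENNReal.coe_ne_top⟩
    set ρ := (r + (ε : ℝ≥0∞)).toReal with hρ
    -- for each c ∈ C we find an approximation within ρ
    have hlt : ∀ c ∈ C, ∃ p ∈ B + K, ∃ c' ∈ C, dist (a + c) (p + c') < ρ := by
      intro c hc
      have h1 : EMetric.infEdist (a + c) (B + K + C) ≤ r := by
        rw [hr, excess]
        exact le_iSup₂ (f := fun x (_ : x ∈ A + C) => EMetric.infEdist x (B + K + C))
          (a + c) (Set.add_mem_add haA hc)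
      have h2 : EMetric.infEdist (a + c) (B + K + C) < r + ε :=
        h1.trans_lt (ENNReal.lt_add_right hfin.ne (by exact_mod_cast hε.ne'))
      obtain ⟨y, hy, hylt⟩ := EMetric.infEdist_lt_iff.1 h2
      rw [Set.mem_add] at hy
      obtain ⟨p, hp, c', hc', rfl⟩ := hy
      refine ⟨p, hp, c', hc', ?_⟩
      rw [edist_dist] at hylt
      exact (ENNReal.ofReal_lt_iff_lt_toReal dist_nonneg hρfin).1 hylt
    -- the open convex set E
    set E : Set X := (closure B + K) + Metric.ball (0 : X) ρ with hE
    have hEconv : Convex ℝ E := hBconv.add (convex_ball 0 ρ)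
    have hEopen : IsOpen E := Metric.isOpen_ball.add_left
    have hEK : ∀ e ∈ E, ∀ k ∈ K, e + k ∈ E := by
      intro e he k hk
      rw [hE, Set.mem_add] at he
      obtain ⟨w, hw, v, hv, rfl⟩ := he
      rw [Set.mem_add] at hw
      obtain ⟨b, hb, k₀, hk₀, rfl⟩ := hw
      refine Set.mem_add.2 ⟨b + (k₀ + k),
        Set.add_mem_add hb (hK_add (Set.add_mem_add hk₀ hk)), v, hv, by abel⟩
    have hsub : ∀ c ∈ C, ∃ e ∈ E, ∃ c' ∈ C, a + c = e + c' := by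
      intro c hc
      obtain ⟨p, hp, c', hc', hdist⟩ := hlt c hc
      refine ⟨p + (a + c - (p + c')), ?_, c', hc', by abel⟩
      refine Set.mem_add.2 ⟨p, Set.add_subset_add subset_closure (Set.Subset.refl K) hp,
        a + c - (p + c'), ?_, rfl⟩
      rw [Metric.mem_ball, dist_zero_right, ← dist_eq_norm]
      exact hdist
    have haE : a ∈ E :=
      mem_of_add_subset_add K C E hK0 hK_cone (fun U ho hc => hCcomp U ho hc) hC
        hEconv hEopen hEK a hsub
    -- conclude
    rw [hE, Set.mem_add] at haE
    obtain ⟨w, hw, v, hv, hav⟩ := haE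
    have hwcl : w ∈ closure (B + K) := by
      rw [Set.mem_add] at hw
      obtain ⟨b, hb, k, hk, rfl⟩ := hw
      have := map_mem_closure (f := fun x : X => x + k) (by continuity) hb
        (fun x hx => Set.add_mem_add hx hk)
      simpa using this
    have h1 : EMetric.infEdist a (B + K) ≤ edist a w := by
      have hcl : Metric.infEDist a (closure (B + K)) = Metric.infEDist a (B + K) :=
        EMetric.infEdist_closure
      exact hcl.symm.le.trans (EMetric.infEdist_le_edist_of_mem hwcl)
    have h2 : edist a w ≤ r + ε := by
      rw [edist_dist]
      have hda : dist a w ≤ ρ := by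
        rw [← hav, dist_eq_norm]
        have hwv : w + v - w = v := by abel
        rw [hwv]
        exact le_of_lt (by simpa [Metric.mem_ball, dist_zero_right] using hv)
      calc ENNReal.ofReal (dist a w) ≤ ENNReal.ofReal ρ := ENNReal.ofReal_le_ofReal hda
        _ = r + ε := ENNReal.ofReal_toReal hρfin
    exact h1.trans h2
  · -- easy direction
    rw [excess, excess]
    refine iSup₂_le fun x hx => ?_
    rw [Set.mem_add] at hx
    obtain ⟨a, ha, c, hc, rfl⟩ := hx
    have h1 : EMetric.infEdist (a + c) (B + K + C)
        ≤ EMetric.infEdist (a + c) ((B + K) + {c}) :=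
      EMetric.infEdist_anti (Set.add_subset_add_left (Set.singleton_subset_iff.2 hc))
    have h2 : EMetric.infEdist (a + c) ((B + K) + {c}) = EMetric.infEdist a (B + K) := by
      rw [Set.add_singleton]
      exact EMetric.infEdist_image (IsometryEquiv.addRight c).isometry
    refine (h1.trans h2.le).trans ?_
    exact le_iSup₂ (f := fun x (_ : x ∈ A) => EMetric.infEdist x (B + K)) a ha
end

section
/- Let X be a real normed vector space and K ⊆ X a closed, convex, pointed cone with nonempty interior. Suppose A, B, C ⊆ X are nonempty, weakly K-compact, K-convex sets. Then: (i) if A + C + int K = C + B + int K, then A + int K = B + int K; (ii) e(A + int K, B + int K) = e(A + C + int K, B + C + int K). -/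
/-
Everything is read off the support functions `σ_S(f) = sup f(S)` for continuous functionals `f`
that are nonpositive on `K`. Weak `K`-compactness of `S` is only used to make these finite: cover
`S` by the weakly open sets `{f < n} + K`. Adding `interior K` does not change `σ_S`, and since
`D + interior K` is open and convex, Hahn–Banach separation shows that
`S + interior K ⊆ D + interior K` as soon as `σ_S ≤ σ_D`. As `σ_{S + C} = σ_S + σ_C`, the finite
term `σ_C` cancels, which gives (i). For (ii), the excess is at most `r` iff
`A + interior K ⊆ (B + ball 0 r') + interior K` for all `r' > r`, and the same cancellation
applies with `D = B + ball 0 r'`.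
-/

open Set Filter Topology Metric Pointwise
open scoped ENNReal

section

variable {G : Type*} [AddCommGroup G] [TopologicalSpace G] [IsTopologicalAddGroup G] {K : Set G}

lemma interior_add_subset (hK_add : K + K ⊆ K) : interior K + K ⊆ interior K :=
  subset_interior_add_left.trans (interior_mono hK_add)

lemma add_add_interior_eq (h0K : (0 : G) ∈ K) (hK_add : K + K ⊆ K) (D : Set G) :
    D + K + interior K = D + interior K := by
  refine (add_subset_add_right (subset_add_left D h0K)).antisymm' ?_
  rw [add_assoc, add_comm K]
  exact add_subset_add_left (interior_add_subset hK_add)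

end

section

variable {X : Type*} [NormedAddCommGroup X] [NormedSpace ℝ X]

lemma weaklyOpen_preimage (f : X →L[ℝ] ℝ) {V : Set ℝ} (hV : IsOpen V) :
    WeaklyOpen (f ⁻¹' V) := by
  rw [WeaklyOpen, LinearEquiv.image_eq_preimage_symm]
  exact (WeakBilin.eval_continuous (topDualPairing ℝ X).flip f).isOpen_preimage _ hV

def PolarBddAbove (K S : Set X) : Prop :=
  ∀ f : X →L[ℝ] ℝ, (∀ k ∈ K, f k ≤ 0) → BddAbove (f '' S)

lemma WeaklyKCompact.polarBddAbove.{u} {K S : Set X} (h0K : (0 : X) ∈ K)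
    (hS : WeaklyKCompact.{_, u} K S) : PolarBddAbove K S := by
  intro f hf
  obtain ⟨t, ht⟩ := hS (fun n : ULift.{u} ℕ => f ⁻¹' Iio (n.down : ℝ))
    (fun _ => weaklyOpen_preimage f isOpen_Iio) fun x _ => by
      obtain ⟨n, hn⟩ := exists_nat_gt (f x)
      exact mem_iUnion.2 ⟨⟨n⟩, x, hn, 0, h0K, add_zero x⟩
  refine ⟨(t.sup fun n => n.down : ℕ), forall_mem_image.2 fun x hx => ?_⟩
  obtain ⟨n, hn, u, hu, k, hk, rfl⟩ := mem_iUnion₂.1 (ht hx)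
  calc f (u + k) = f u + f k := map_add f u k
    _ ≤ n.down := by linarith [hf k hk, show f u < n.down from hu]
    _ ≤ _ := by exact_mod_cast Finset.le_sup (f := fun n : ULift.{u} ℕ => n.down) hn

lemma PolarBddAbove.add {K S T : Set X} (hS : PolarBddAbove K S) (hT : PolarBddAbove K T) :
    PolarBddAbove K (S + T) := fun f hf => by
  rw [image_add]
  exact (hS f hf).add (hT f hf)

lemma Bornology.IsBounded.polarBddAbove {K S : Set X} (hS : Bornology.IsBounded S) :
    PolarBddAbove K S := fun f _ => (f.lipschitz.isBounded_image hS).bddAbove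

lemma polarBddAbove_interior (K : Set X) : PolarBddAbove K (interior K) := fun _ hf =>
  ⟨0, forall_mem_image.2 fun _ hk => hf _ (interior_subset hk)⟩

variable {K : Set X}

lemma convex_add_interior (hK_conv : Convex ℝ K) (h0K : (0 : X) ∈ K) (hK_add : K + K ⊆ K)
    {D : Set X} (hD : Convex ℝ (D + K)) : Convex ℝ (D + interior K) :=
  add_add_interior_eq h0K hK_add D ▸ hD.add hK_conv.interior

lemma nonpos_of_bddAbove_image (hK_cone : ∀ t : ℝ, 0 ≤ t → ∀ x ∈ K, t • x ∈ K) {T : Set X}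
    (hT : T.Nonempty) (hTK : T + K ⊆ T) {f : X →L[ℝ] ℝ} (hf : BddAbove (f '' T)) :
    ∀ k ∈ K, f k ≤ 0 := by
  intro k hk
  by_contra! hfk
  obtain ⟨x, hx⟩ := hT
  obtain ⟨M, hM⟩ := hf
  obtain ⟨n, hn⟩ := exists_nat_gt ((M - f x) / f k)
  have hmem : x + (n : ℝ) • k ∈ T := hTK ⟨x, hx, _, hK_cone n n.cast_nonneg k hk, rfl⟩
  have hle := hM (mem_image_of_mem f hmem)
  rw [map_add, map_smul, smul_eq_mul] at hle
  rw [div_lt_iff₀ hfk] at hn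
  linarith

lemma neg_of_mem_interior {f : X →L[ℝ] ℝ} (hf0 : f ≠ 0) (hf : ∀ k ∈ K, f k ≤ 0) {e : X}
    (he : e ∈ interior K) : f e < 0 := by
  have : f '' interior K ⊆ interior (Iic 0) :=
    interior_maximal (forall_mem_image.2 fun _ hk => hf _ (interior_subset hk))
      (f.isOpenMap_of_ne_zero hf0 _ isOpen_interior)
  rw [interior_Iic] at this
  exact this (mem_image_of_mem f he)

lemma sSup_image_interior (hK_conv : Convex ℝ K) (h0K : (0 : X) ∈ K)
    (hK_solid : (interior K).Nonempty) {f : X →L[ℝ] ℝ} (hf : ∀ k ∈ K, f k ≤ 0) :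
    sSup (f '' interior K) = 0 := by
  have h0 : (0 : X) ∈ closure (interior K) := by
    rw [hK_conv.closure_interior_eq_closure_of_nonempty_interior hK_solid]
    exact subset_closure h0K
  refine (isLUB_of_mem_closure (forall_mem_image.2 fun _ hk => hf _ (interior_subset hk))
    ?_).csSup_eq (hK_solid.image f)
  exact image_closure_subset_closure_image f.continuous ⟨0, h0, map_zero f⟩

lemma sSup_image_add_interior (hK_conv : Convex ℝ K) (h0K : (0 : X) ∈ K)
    (hK_solid : (interior K).Nonempty) {f : X →L[ℝ] ℝ} (hf : ∀ k ∈ K, f k ≤ 0) {S : Set X}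
    (hS : S.Nonempty) (hSbdd : BddAbove (f '' S)) :
    sSup (f '' (S + interior K)) = sSup (f '' S) := by
  rw [image_add, csSup_add (hS.image f) hSbdd (hK_solid.image f)
    (polarBddAbove_interior K f hf), sSup_image_interior hK_conv h0K hK_solid hf, add_zero]

theorem add_interior_subset_of_sSup_le (hK_conv : Convex ℝ K)
    (hK_cone : ∀ t : ℝ, 0 ≤ t → ∀ x ∈ K, t • x ∈ K) (hK_add : K + K ⊆ K) (h0K : (0 : X) ∈ K)
    {S D : Set X} (hS : PolarBddAbove K S) (hD : D.Nonempty) (hDbdd : PolarBddAbove K D)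
    (hDconv : Convex ℝ (D + K))
    (h : ∀ f : X →L[ℝ] ℝ, (∀ k ∈ K, f k ≤ 0) → sSup (f '' S) ≤ sSup (f '' D)) :
    S + interior K ⊆ D + interior K := by
  rintro _ ⟨s, hs, e, he, rfl⟩
  by_contra hx
  obtain ⟨f, hf⟩ := geometric_hahn_banach_open_point
    (convex_add_interior hK_conv h0K hK_add hDconv) isOpen_interior.add_left hx
  have hK_solid : (interior K).Nonempty := ⟨e, he⟩
  have hDK : (D + interior K).Nonempty := hD.add hK_solid
  have hDK_le : ∀ y ∈ f '' (D + interior K), y ≤ f (s + e) :=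
    forall_mem_image.2 fun y hy => (hf y hy).le
  have hfK : ∀ k ∈ K, f k ≤ 0 := by
    refine nonpos_of_bddAbove_image hK_cone hDK ?_ ⟨_, hDK_le⟩
    rw [add_assoc]
    exact add_subset_add_left (interior_add_subset hK_add)
  have hfe : f e < 0 := by
    refine neg_of_mem_interior (fun hf0 => ?_) hfK he
    obtain ⟨y, hy⟩ := hDK
    simpa [hf0] using hf y hy
  -- `σ_D = σ_{D + interior K} ≤ f s + f e < f s ≤ σ_S ≤ σ_D`
  have hsupD := csSup_le (hDK.image f) hDK_le
  rw [sSup_image_add_interior hK_conv h0K hK_solid hfK hD (hDbdd f hfK), map_add] at hsupD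
  linarith [h f hfK, le_csSup (hS f hfK) (mem_image_of_mem f hs)]

theorem add_interior_subset_of_add_add_interior_subset (hK_conv : Convex ℝ K)
    (hK_cone : ∀ t : ℝ, 0 ≤ t → ∀ x ∈ K, t • x ∈ K) (hK_add : K + K ⊆ K) (h0K : (0 : X) ∈ K)
    (hK_solid : (interior K).Nonempty) {A C D : Set X}
    (hA : A.Nonempty) (hAbdd : PolarBddAbove K A) (hC : C.Nonempty) (hCbdd : PolarBddAbove K C)
    (hD : D.Nonempty) (hDbdd : PolarBddAbove K D) (hDconv : Convex ℝ (D + K))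
    (h : A + C + interior K ⊆ D + C + interior K) : A + interior K ⊆ D + interior K := by
  refine add_interior_subset_of_sSup_le hK_conv hK_cone hK_add h0K hAbdd hD hDbdd hDconv
    fun f hf => ?_
  have hle := csSup_le_csSup ((hDbdd.add hCbdd).add (polarBddAbove_interior K) f hf)
    (((hA.add hC).add hK_solid).image f) (image_mono h)
  rw [sSup_image_add_interior hK_conv h0K hK_solid hf (hA.add hC) ((hAbdd.add hCbdd) f hf),
    sSup_image_add_interior hK_conv h0K hK_solid hf (hD.add hC) ((hDbdd.add hCbdd) f hf),
    image_add, image_add, csSup_add (hA.image f) (hAbdd f hf) (hC.image f) (hCbdd f hf),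
    csSup_add (hD.image f) (hDbdd f hf) (hC.image f) (hCbdd f hf)] at hle
  linarith

end

section

variable {Y : Type*} [SeminormedAddCommGroup Y]

lemma excess_le_ofReal_iff {S T : Set Y} {r : ℝ} (hr : 0 ≤ r) :
    excess S T ≤ ENNReal.ofReal r ↔ ∀ r' > r, S ⊆ T + ball 0 r' := by
  have hcth : excess S T ≤ ENNReal.ofReal r ↔ S ⊆ cthickening r T := iSup₂_le_iff
  simp only [hcth, cthickening_eq_iInter_thickening hr, subset_iInter₂_iff, add_ball_zero]

lemma excess_eq_of_forall_subset_add_ball_iff {S T S' T' : Set Y}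
    (h : ∀ r > 0, S ⊆ T + ball 0 r ↔ S' ⊆ T' + ball 0 r) : excess S T = excess S' T' := by
  refine eq_of_forall_ge_iff fun c => ?_
  rcases eq_or_ne c ⊤ with rfl | hc
  · simp
  rw [← ENNReal.ofReal_toReal hc, excess_le_ofReal_iff ENNReal.toReal_nonneg,
    excess_le_ofReal_iff ENNReal.toReal_nonneg]
  exact forall₂_congr fun r' hr' => h r' (ENNReal.toReal_nonneg.trans_lt hr')

end

theorem cancellation_and_excess_int_K_general {X : Type*} [NormedAddCommGroup X] [NormedSpace ℝ X]
    (K A B C : Set X)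
    (hK_conv : Convex ℝ K)
    (hK_cone : ∀ t : ℝ, 0 ≤ t → ∀ x ∈ K, t • x ∈ K)
    (hK_add : K + K ⊆ K)
    (hK_solid : (interior K).Nonempty)
    (hA : A.Nonempty) (hB : B.Nonempty) (hC : C.Nonempty)
    (hAcomp : WeaklyKCompact K A) (hBcomp : WeaklyKCompact K B) (hCcomp : WeaklyKCompact K C)
    (hAconv : Convex ℝ (A + K)) (hBconv : Convex ℝ (B + K)) :
    (A + C + interior K = C + B + interior K → A + interior K = B + interior K) ∧
    excess (A + interior K) (B + interior K)
      = excess (A + C + interior K) (B + C + interior K) := by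
  have h0K : (0 : X) ∈ K := by
    simpa using hK_cone 0 le_rfl _ (interior_subset hK_solid.some_mem)
  have hAbdd := hAcomp.polarBddAbove h0K
  have hBbdd := hBcomp.polarBddAbove h0K
  have hCbdd := hCcomp.polarBddAbove h0K
  have cancel := @add_interior_subset_of_add_add_interior_subset X _ _ K hK_conv hK_cone hK_add
    h0K hK_solid
  refine ⟨fun h => ?_, excess_eq_of_forall_subset_add_ball_iff fun r hr => ?_⟩
  · rw [add_comm C B] at h
    exact (cancel hA hAbdd hC hCbdd hB hBbdd hBconv h.subset).antisymm
      (cancel hB hBbdd hC hCbdd hA hAbdd hAconv h.superset)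
  · rw [add_right_comm B, add_right_comm (B + C), add_right_comm B C]
    refine ⟨fun h => ?_, cancel hA hAbdd hC hCbdd (hB.add (nonempty_ball.2 hr))
      (hBbdd.add isBounded_ball.polarBddAbove)
      (add_right_comm B (ball 0 r) K ▸ hBconv.add (convex_ball 0 r))⟩
    rw [add_right_comm A, add_right_comm (B + ball 0 r)]
    exact add_subset_add_right h

/-- Cancellation and excess invariance for weakly `K`-compact, `K`-convex sets
(Corollary 24). -/
theorem cancellation_and_excess_int_K {X : Type*} [NormedAddCommGroup X] [NormedSpace ℝ X]
    (K A B C : Set X)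
    (hK_closed : IsClosed K) (hK_conv : Convex ℝ K)
    (hK_cone : ∀ t : ℝ, 0 ≤ t → ∀ x ∈ K, t • x ∈ K)
    (hK_add : K + K ⊆ K) (hK_pointed : K ∩ (-K) = {0})
    (hK_solid : (interior K).Nonempty)
    (hA : A.Nonempty) (hB : B.Nonempty) (hC : C.Nonempty)
    (hAcomp : WeaklyKCompact K A) (hBcomp : WeaklyKCompact K B) (hCcomp : WeaklyKCompact K C)
    (hAconv : Convex ℝ (A + K)) (hBconv : Convex ℝ (B + K)) (hCconv : Convex ℝ (C + K)) :
    (A + C + interior K = C + B + interior K → A + interior K = B + interior K) ∧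
    excess (A + interior K) (B + interior K)
      = excess (A + C + interior K) (B + C + interior K) :=
  cancellation_and_excess_int_K_general K A B C hK_conv hK_cone hK_add hK_solid hA hB hC hAcomp
    hBcomp hCcomp hAconv hBconv
end

section
/- Let X be a real normed vector space with closed unit ball D_X and K ⊆ X a closed, convex, pointed cone. Suppose A, B, C ⊆ X are nonempty sets such that C is K-bounded and, for every α > 0, the set B + αD_X is K-convex and K-closed. Then e(A, B + K) = e(A + C, C + B + K). -/
open Set Filter Topology Metric Pointwise
open scoped ENNReal

/-- Rådström-type cancellation: if `a + C ⊆ C + S` elementwise, `C` is `K`-bounded,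
and `S` is closed, convex and stable under adding `K`, then `a ∈ S`. -/
lemma radstrom_cancel {X : Type*} [NormedAddCommGroup X] [NormedSpace ℝ X]
    {K C S M : Set X} {a : X}
    (hK_cone : ∀ t : ℝ, 0 ≤ t → ∀ x ∈ K, t • x ∈ K)
    (hM : Bornology.IsBounded M) (hCM : C ⊆ M + K) (hC : C.Nonempty)
    (hSclosed : IsClosed S) (hSconv : Convex ℝ S)
    (hSK : ∀ s ∈ S, ∀ k ∈ K, s + k ∈ S)
    (hsub : ∀ c ∈ C, ∃ c' ∈ C, ∃ s ∈ S, a + c = c' + s) :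
    a ∈ S := by
  obtain ⟨c₀, hc₀⟩ := hC
  have hstep : ∀ c : {x // x ∈ C}, ∃ c' : {x // x ∈ C}, ∃ s ∈ S, a + c.1 = c'.1 + s := by
    rintro ⟨c, hc⟩
    obtain ⟨c', hc', s, hs, he⟩ := hsub c hc
    exact ⟨⟨c', hc'⟩, s, hs, he⟩
  choose g s hsS heq using hstep
  set seq : ℕ → {x // x ∈ C} := fun n => g^[n] ⟨c₀, hc₀⟩ with hseq
  have hseq_succ : ∀ n, seq (n + 1) = g (seq n) := fun n =>
    Function.iterate_succ_apply' g n _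
  set b : ℕ → X := fun n => s (seq n) with hbdef
  have hb : ∀ n, b n ∈ S := fun n => hsS (seq n)
  have hrec : ∀ n, a + (seq n).1 = (seq (n + 1)).1 + b n := by
    intro n; rw [hseq_succ]; exact heq (seq n)
  have key : ∀ n : ℕ, n • a + c₀ = (seq n).1 + ∑ i ∈ Finset.range n, b i := by
    intro n
    induction n with
    | zero => simp [hseq]
    | succ n ih =>
      rw [succ_nsmul, Finset.sum_range_succ]
      have : n • a + a + c₀ = a + (n • a + c₀) := by abel
      rw [this, ih, ← add_assoc, hrec n]
      abel
  -- decompose seq n = m n + k n with m n ∈ M, k n ∈ K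
  have hdec : ∀ n : ℕ, ∃ m ∈ M, ∃ k ∈ K, (seq n).1 = m + k := by
    intro n
    obtain ⟨m, hm, k, hk, h⟩ := hCM (seq n).2
    exact ⟨m, hm, k, hk, h.symm⟩
  choose m hmM k hkK hmk using hdec
  set x : ℕ → X := fun n => a + (1 / (n : ℝ)) • c₀ - (1 / (n : ℝ)) • m n with hx
  obtain ⟨L, hL⟩ := isBounded_iff_forall_norm_le.1 hM
  -- each x n (n ≥ 1) lies in S
  have hxS : ∀ n : ℕ, 1 ≤ n → x n ∈ S := by
    intro n hn
    have hn0 : (n : ℝ) ≠ 0 := Nat.cast_ne_zero.2 (by omega)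
    set t : ℝ := 1 / (n : ℝ) with ht
    have ht0 : 0 ≤ t := by positivity
    have e1 : t • ((n • a : X) + c₀) = t • ((m n + k n) + ∑ i ∈ Finset.range n, b i) := by
      rw [← hmk n, ← key n]
    have e2 : t • (n • a : X) = a := by
      rw [← Nat.cast_smul_eq_nsmul ℝ n a, smul_smul, ht, one_div,
        inv_mul_cancel₀ hn0, one_smul]
    rw [smul_add, e2, smul_add, smul_add] at e1
    -- e1 : a + t • c₀ = (t • m n + t • k n) + t • ∑ ...
    have e3 : x n = t • (∑ i ∈ Finset.range n, b i) + t • k n := by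
      rw [hx]
      simp only [← ht]
      rw [e1]; abel
    rw [e3]
    have hsum : t • (∑ i ∈ Finset.range n, b i) ∈ S := by
      rw [Finset.smul_sum]
      refine hSconv.sum_mem (fun i _ => ht0) ?_ (fun i _ => hb i)
      rw [Finset.sum_const, Finset.card_range, nsmul_eq_mul, ht]
      field_simp
    exact hSK _ hsum _ (hK_cone t ht0 _ (hkK n))
  -- x n → a
  have hxt : Tendsto x atTop (𝓝 a) := by
    rw [tendsto_iff_norm_sub_tendsto_zero]
    have hbound : ∀ n : ℕ, ‖x n - a‖ ≤ (1 / (n : ℝ)) * (‖c₀‖ + L) := by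
      intro n
      have : x n - a = (1 / (n : ℝ)) • (c₀ - m n) := by
        show a + (1 / (n : ℝ)) • c₀ - (1 / (n : ℝ)) • m n - a = _
        rw [smul_sub]; abel
      rw [this, norm_smul, Real.norm_eq_abs]
      have h1 : |1 / (n : ℝ)| = 1 / (n : ℝ) := abs_of_nonneg (by positivity)
      rw [h1]
      refine mul_le_mul_of_nonneg_left ?_ (by positivity)
      exact (norm_sub_le _ _).trans (add_le_add le_rfl (hL _ (hmM n)))
    have hlim : Tendsto (fun n : ℕ => (1 / (n : ℝ)) * (‖c₀‖ + L)) atTop (𝓝 0) := by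
      simpa using tendsto_one_div_atTop_nhds_zero_nat.mul_const (‖c₀‖ + L)
    exact squeeze_zero (fun n => norm_nonneg _) hbound hlim
  exact hSclosed.mem_of_tendsto hxt
    (Filter.eventually_atTop.2 ⟨1, fun n hn => hxS n hn⟩)

/-- Invariance of the conic excess under addition of a `K`-bounded set (Proposition 25). -/
theorem excess_invariant_K_bounded {X : Type*} [NormedAddCommGroup X] [NormedSpace ℝ X]
    (K A B C : Set X)
    (hK_closed : IsClosed K) (hK_conv : Convex ℝ K)
    (hK_cone : ∀ t : ℝ, 0 ≤ t → ∀ x ∈ K, t • x ∈ K)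
    (hK_add : K + K ⊆ K) (hK_pointed : K ∩ (-K) = {0})
    (hA : A.Nonempty) (hB : B.Nonempty) (hC : C.Nonempty)
    (hCbd : KBounded K C)
    (hB' : ∀ α : ℝ, 0 < α →
      Convex ℝ (B + α • Metric.closedBall (0 : X) 1 + K) ∧
      IsClosed (B + α • Metric.closedBall (0 : X) 1 + K)) :
    excess A (B + K) = excess (A + C) (C + B + K) := by
  have step1 : excess (A + C) (C + B + K) ≤ excess A (B + K) := by
    rw [excess, excess]
    refine iSup₂_le fun x hx => ?_
    obtain ⟨a, ha, c, hc, rfl⟩ := hx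
    have h1 : {c} + (B + K) ⊆ C + B + K := by
      rw [← add_assoc]
      exact add_subset_add_right (add_subset_add_right (singleton_subset_iff.2 hc))
    calc EMetric.infEdist (a + c) (C + B + K)
        ≤ EMetric.infEdist (a + c) ({c} + (B + K)) := EMetric.infEdist_anti h1
      _ = EMetric.infEdist a (B + K) := by
          rw [add_comm a c, Set.singleton_add]
          exact EMetric.infEdist_image (isometry_add_left c)
      _ ≤ ⨆ x ∈ A, EMetric.infEdist x (B + K) := le_iSup₂_of_le a ha le_rfl
  have step2 : excess A (B + K) ≤ excess (A + C) (C + B + K) := by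
    set R := excess (A + C) (C + B + K) with hR
    rw [excess]
    refine iSup₂_le fun a ha => ?_
    refine ENNReal.le_of_forall_pos_le_add fun ε hε hRtop => ?_
    set α : ℝ := R.toReal + (ε : ℝ) with hα
    have hε0 : (0 : ℝ) < (ε : ℝ) := by exact_mod_cast hε
    have hα0 : 0 < α := add_pos_of_nonneg_of_pos ENNReal.toReal_nonneg hε0
    have hofα : ENNReal.ofReal α = R + ε := by
      rw [hα, ENNReal.ofReal_add ENNReal.toReal_nonneg hε0.le,
        ENNReal.ofReal_toReal hRtop.ne, ENNReal.ofReal_coe_nnreal]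
    have hRα : R < ENNReal.ofReal α := by
      rw [hofα]
      exact ENNReal.lt_add_right hRtop.ne (by exact_mod_cast hε.ne')
    obtain ⟨hconv, hclosed⟩ := hB' α hα0
    set S := B + α • Metric.closedBall (0 : X) 1 + K with hS
    have hSK : ∀ s ∈ S, ∀ k ∈ K, s + k ∈ S := by
      rintro s ⟨u, hu, k₁, hk₁, rfl⟩ k hk
      exact ⟨u, hu, k₁ + k, hK_add (add_mem_add hk₁ hk), (add_assoc _ _ _).symm⟩
    have hsub : ∀ c ∈ C, ∃ c' ∈ C, ∃ s ∈ S, a + c = c' + s := by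
      intro c hc
      have hmem : a + c ∈ A + C := add_mem_add ha hc
      have h1 : EMetric.infEdist (a + c) (C + B + K) < ENNReal.ofReal α := by
        refine lt_of_le_of_lt ?_ hRα
        rw [hR, excess]
        exact le_iSup₂_of_le (a + c) hmem le_rfl
      obtain ⟨y, hy, hyd⟩ := EMetric.infEdist_lt_iff.1 h1
      obtain ⟨u, hu, k, hk, rfl⟩ := hy
      obtain ⟨c', hc', b, hb, rfl⟩ := hu
      set v := a + c - (c' + b + k) with hv
      have hvn : ‖v‖ ≤ α := by
        rw [edist_lt_ofReal, dist_eq_norm] at hyd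
        exact hyd.le
      have hvmem : v ∈ α • Metric.closedBall (0 : X) 1 := by
        refine ⟨α⁻¹ • v, ?_, smul_inv_smul₀ hα0.ne' v⟩
        rw [mem_closedBall_zero_iff, norm_smul, norm_inv, Real.norm_eq_abs,
          abs_of_pos hα0]
        rw [inv_mul_le_iff₀ hα0, mul_one]
        exact hvn
      refine ⟨c', hc', b + v + k, ?_, by rw [hv]; abel⟩
      exact add_mem_add (add_mem_add hb hvmem) hk
    obtain ⟨M, hMbd, hCM⟩ := hCbd
    have haS : a ∈ S := radstrom_cancel hK_cone hMbd hCM hC hclosed hconv hSK hsub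
    obtain ⟨w, hw, k, hk, heq⟩ := haS
    obtain ⟨b, hb, d, hd, heq2⟩ := hw
    have hdn : ‖d‖ ≤ α := by
      obtain ⟨d', hd', rfl⟩ := hd
      rw [mem_closedBall_zero_iff] at hd'
      rw [norm_smul, Real.norm_eq_abs, abs_of_pos hα0]
      calc α * ‖d'‖ ≤ α * 1 := by nlinarith
        _ = α := mul_one α
    have hbk : b + k ∈ B + K := add_mem_add hb hk
    calc EMetric.infEdist a (B + K) ≤ edist a (b + k) :=
          EMetric.infEdist_le_edist_of_mem hbk
      _ ≤ ENNReal.ofReal α := by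
          rw [edist_dist, dist_eq_norm]
          refine ENNReal.ofReal_le_ofReal ?_
          have heqa : b + d + k = a := by rw [← heq2] at heq; exact heq
          have : a - (b + k) = d := by rw [← heqa]; abel
          rw [this]; exact hdn
      _ = R + ε := hofα
  exact le_antisymm step2 step1
end

section
/- Let X be a real normed vector space with closed unit ball D_X and K ⊆ X a closed, convex, pointed cone. Suppose A, B, C ⊆ X are nonempty, K-sequentially compact, K-convex sets, and that D_X is K-closed. Then: (i) if A + C + K = C + B + K, then A + K = B + K; (ii) e(A + K, B + K) = e(A + C + K, B + C + K). -/
/-!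
Both parts rest on an order cancellation law: if `P` is closed, convex and stable under adding
`K`, `C` is nonempty and `K`-sequentially compact, and `a + C ⊆ C + P`, then `a ∈ P`.
Iterating `a + c = c' + p` from some `c₀ ∈ C` gives `n • a + c₀ ∈ C + n • P`, so by convexity
`a - (c - c₀) / n ∈ P` for some `c ∈ C`; correcting `c` by cone elements makes a subsequence of
these points converge to `a`. Part (i) is the law for `P = B + K`. For part (ii), if
`e(A + C + K, B + C + K) < ρ` then `A + K + C ⊆ C + (B + K + ρ D_X)`, and the law for
`P = B + K + ρ D_X` gives `e(A + K, B + K) ≤ ρ`; this `P` is closed because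
`ρ D_X + K = ρ (D_X + K)` is closed and adding a `K`-sequentially compact set to a closed set
stable under `K` keeps it closed. The other inequality is the translation invariance of distances.
-/

open Set Filter Topology Metric Pointwise
open scoped ENNReal

section Excess

variable {Y : Type*} [SeminormedAddCommGroup Y] {S T : Set Y}

lemma infEDist_le_excess {x : Y} (hx : x ∈ S) : infEDist x T ≤ excess S T :=
  le_iSup₂ (f := fun x _ => infEDist x T) x hx

lemma excess_add_right_le (S T C : Set Y) : excess (S + C) (T + C) ≤ excess S T := by
  refine iSup₂_le fun _ hx => ?_
  obtain ⟨s, hs, c, hc, rfl⟩ := hx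
  calc infEDist (s + c) (T + C) ≤ infEDist (s + c) (T + {c}) :=
        infEDist_anti (add_subset_add_left (singleton_subset_iff.2 hc))
    _ = infEDist s T := by rw [add_singleton]; exact infEDist_image (isometry_add_right c)
    _ ≤ excess S T := infEDist_le_excess hs

lemma subset_add_ball_of_excess_lt {ρ : ℝ} (h : excess S T < ENNReal.ofReal ρ) :
    S ⊆ T + ball 0 ρ := by
  rw [add_ball_zero]
  exact fun x hx => mem_thickening_iff_infEDist_lt.2 ((infEDist_le_excess hx).trans_lt h)

lemma excess_le_of_subset_add_closedBall {ρ : ℝ} (h : S ⊆ T + closedBall 0 ρ) :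
    excess S T ≤ ENNReal.ofReal ρ := by
  refine iSup₂_le fun x hx => ?_
  obtain ⟨t, ht, u, hu, rfl⟩ := h hx
  calc infEDist (t + u) T ≤ edist (t + u) t := infEDist_le_edist_of_mem ht
    _ = ENNReal.ofReal ‖u‖ := by rw [edist_dist, add_comm, dist_add_self_left]
    _ ≤ ENNReal.ofReal ρ := ENNReal.ofReal_le_ofReal (mem_closedBall_zero_iff.1 hu)

lemma excess_le_of_forall_subset_add_closedBall {r : ℝ≥0∞}
    (h : ∀ ρ : ℝ, r < ENNReal.ofReal ρ → S ⊆ T + closedBall 0 ρ) : excess S T ≤ r := by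
  refine le_of_forall_gt_imp_ge_of_dense fun c hc => ?_
  rcases eq_or_ne c ⊤ with rfl | hc_top
  · exact le_top
  rw [← ENNReal.ofReal_toReal hc_top] at hc ⊢
  exact excess_le_of_subset_add_closedBall (h _ hc)

end Excess

section Cone

variable {X : Type*} [NormedAddCommGroup X] {K S T : Set X}

lemma KSeqCompact.isClosed_add (hS : KSeqCompact K S) (hT : IsClosed T) (hTK : T + K ⊆ T) :
    IsClosed (S + T) := by
  refine IsSeqClosed.isClosed fun x p hx hxp => ?_
  choose s hs t ht hst using fun n => mem_add.1 (hx n)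
  obtain ⟨c, hc, φ, hφ, l, hl, hlim⟩ := hS s hs
  have htc : Tendsto (fun n => t (φ n) + c (φ n)) atTop (𝓝 (p - l)) := by
    refine ((hxp.comp hφ.tendsto_atTop).sub hlim).congr fun n => ?_
    simp only [Function.comp_apply, ← hst]
    abel
  have hpl : p - l ∈ T := hT.mem_of_tendsto htc
    (Eventually.of_forall fun n => hTK (add_mem_add (ht _) (hc _)))
  exact ⟨l, hl, p - l, hpl, add_sub_cancel l p⟩

variable [NormedSpace ℝ X] {C P : Set X}

lemma smul_set_eq_self_of_cone (hK : ∀ t : ℝ, 0 ≤ t → ∀ x ∈ K, t • x ∈ K) {t : ℝ} (ht : 0 < t) :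
    t • K = K :=
  (smul_set_subset_iff.2 fun x hx => hK t ht.le x hx).antisymm fun x hx =>
    ⟨t⁻¹ • x, hK _ (inv_nonneg.2 ht.le) x hx, smul_inv_smul₀ ht.ne' x⟩

lemma isClosed_closedBall_add (hK : ∀ t : ℝ, 0 ≤ t → ∀ x ∈ K, t • x ∈ K)
    (hDX : IsClosed (closedBall (0 : X) 1 + K)) {ρ : ℝ} (hρ : 0 < ρ) :
    IsClosed (closedBall (0 : X) ρ + K) := by
  have h := hDX.smul_of_ne_zero hρ.ne'
  rwa [smul_add, smul_unitClosedBall, Real.norm_of_nonneg hρ.le,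
    smul_set_eq_self_of_cone hK hρ] at h

lemma exists_sub_inv_smul_mem {a c₀ : X} (hP : Convex ℝ P) (h : ∀ c ∈ C, a + c ∈ C + P)
    (hc₀ : c₀ ∈ C) (n : ℕ) : ∃ c ∈ C, a - ((n : ℝ) + 1)⁻¹ • (c - c₀) ∈ P := by
  have hiter : ∀ n : ℕ, ((n : ℝ) + 1) • a + c₀ ∈ C + ((n : ℝ) + 1) • P := by
    intro n
    induction n with
    | zero => simpa using h c₀ hc₀
    | succ n ih =>
      obtain ⟨c, hc, q, hq, hcq⟩ := ih
      obtain ⟨c', hc', p, hp, hcp⟩ := h c hc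
      refine ⟨c', hc', p + q, ?_, ?_⟩
      · rw [Nat.cast_succ, add_comm (n : ℝ), add_assoc, hP.add_smul zero_le_one (by positivity),
          one_smul]
        exact add_mem_add hp hq
      · beta_reduce at hcq hcp ⊢
        rw [← add_assoc, hcp, add_assoc, hcq, Nat.cast_succ]
        module
  obtain ⟨c, hc, _, ⟨p, hp, rfl⟩, hcp⟩ := hiter n
  refine ⟨c, hc, ?_⟩
  beta_reduce at hcp
  convert hp using 1
  rw [eq_sub_of_add_eq hcp]
  match_scalars <;> field_simp <;> ring

lemma subset_of_add_subset_add (hK : ∀ t : ℝ, 0 ≤ t → ∀ x ∈ K, t • x ∈ K) (hC : C.Nonempty)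
    (hCcomp : KSeqCompact K C) (hP_closed : IsClosed P) (hP_conv : Convex ℝ P)
    (hPK : P + K ⊆ P) {A : Set X} (h : A + C ⊆ C + P) : A ⊆ P := by
  intro a ha
  obtain ⟨c₀, hc₀⟩ := hC
  choose c hc hcP using
    exists_sub_inv_smul_mem hP_conv (fun c hc => h (add_mem_add ha hc)) hc₀
  obtain ⟨d, hd, φ, hφ, l, -, hlim⟩ := hCcomp c hc
  set t : ℕ → ℝ := fun n => ((φ n : ℝ) + 1)⁻¹
  have ht : Tendsto t atTop (𝓝 0) := by
    simpa only [one_div, Function.comp_def] using (tendsto_one_div_add_atTop_nhds_zero_nat (𝕜 := ℝ)).comp hφ.tendsto_atTop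
  have hmem : ∀ n, a - t n • (c (φ n) - d (φ n) - c₀) ∈ P := fun n => by
    convert hPK (add_mem_add (hcP (φ n)) (hK (t n) (by positivity) _ (hd (φ n)))) using 1
    module
  have hconv : Tendsto (fun n => a - t n • (c (φ n) - d (φ n) - c₀)) atTop (𝓝 a) := by
    simpa using tendsto_const_nhds.sub (ht.smul (hlim.sub_const c₀))
  exact hP_closed.mem_of_tendsto hconv (Eventually.of_forall hmem)

end Cone

theorem cancellation_and_excess_K_seq_compact_general {X : Type*} [NormedAddCommGroup X]
    [NormedSpace ℝ X] (K A B C : Set X)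
    (hK_closed : IsClosed K)
    (hK_cone : ∀ t : ℝ, 0 ≤ t → ∀ x ∈ K, t • x ∈ K)
    (hK_add : K + K ⊆ K)
    (hC : C.Nonempty)
    (hAcomp : KSeqCompact K A) (hBcomp : KSeqCompact K B) (hCcomp : KSeqCompact K C)
    (hAconv : Convex ℝ (A + K)) (hBconv : Convex ℝ (B + K))
    (hDX : IsClosed (Metric.closedBall (0 : X) 1 + K)) :
    (A + C + K = C + B + K → A + K = B + K) ∧
    excess (A + K) (B + K) = excess (A + C + K) (B + C + K) := by
  have hKK : ∀ S : Set X, S + K + K ⊆ S + K := fun S => by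
    rw [add_assoc]; exact add_subset_add_left hK_add
  have hcancel {P A : Set X} := subset_of_add_subset_add (P := P) (A := A) hK_cone hC hCcomp
  refine ⟨fun heq => ?_, le_antisymm ?_ ?_⟩
  · refine (hcancel (hBcomp.isClosed_add hK_closed hK_add) hBconv (hKK B) ?_).antisymm
      (hcancel (hAcomp.isClosed_add hK_closed hK_add) hAconv (hKK A) ?_)
    · exact (show A + K + C = C + (B + K) by rw [add_right_comm, heq, add_assoc]).subset
    · exact (show B + K + C = C + (A + K) by rw [← add_assoc, ← add_comm A C, heq]; abel).subset
  · refine excess_le_of_forall_subset_add_closedBall fun ρ hρ => ?_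
    have hρ0 : 0 < ρ := ENNReal.ofReal_pos.1 (pos_of_gt hρ)
    refine hcancel ?_ (hBconv.add (convex_closedBall 0 ρ)) ?_ ?_
    · rw [add_assoc, add_comm K]
      exact hBcomp.isClosed_add (isClosed_closedBall_add hK_cone hDX hρ0) (hKK _)
    · rw [add_right_comm]; exact add_subset_add_right (hKK B)
    · calc A + K + C = A + C + K := add_right_comm _ _ _
        _ ⊆ B + C + K + ball 0 ρ := subset_add_ball_of_excess_lt hρ
        _ ⊆ B + C + K + closedBall 0 ρ := add_subset_add_left ball_subset_closedBall
        _ = C + (B + K + closedBall 0 ρ) := by abel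
  · simpa only [add_right_comm _ C K] using excess_add_right_le (A + K) (B + K) C

/-- Cancellation and excess invariance for `K`-sequentially compact, `K`-convex sets
(Corollary 27). -/
theorem cancellation_and_excess_K_seq_compact {X : Type*} [NormedAddCommGroup X]
    [NormedSpace ℝ X] (K A B C : Set X)
    (hK_closed : IsClosed K) (hK_conv : Convex ℝ K)
    (hK_cone : ∀ t : ℝ, 0 ≤ t → ∀ x ∈ K, t • x ∈ K)
    (hK_add : K + K ⊆ K) (hK_pointed : K ∩ (-K) = {0})
    (hA : A.Nonempty) (hB : B.Nonempty) (hC : C.Nonempty)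
    (hAcomp : KSeqCompact K A) (hBcomp : KSeqCompact K B) (hCcomp : KSeqCompact K C)
    (hAconv : Convex ℝ (A + K)) (hBconv : Convex ℝ (B + K)) (hCconv : Convex ℝ (C + K))
    (hDX : IsClosed (Metric.closedBall (0 : X) 1 + K)) :
    (A + C + K = C + B + K → A + K = B + K) ∧
    excess (A + K) (B + K) = excess (A + C + K) (B + C + K) :=
  cancellation_and_excess_K_seq_compact_general K A B C hK_closed hK_cone hK_add hC hAcomp hBcomp
    hCcomp hAconv hBconv hDX
end

section
/- Let Z and X be real normed vector spaces, K ⊆ X a closed, convex, pointed cone with nonempty interior, M ⊆ Z a nonempty closed set, and F : Z ⇒ X a set-valued map with nonempty values. Suppose z̄ ∈ M is a sharp weak minimum of F on M with constant μ > 0 and direction e ∈ K \ {0}, i.e., for all z ∈ M, F(z̄) ⊄ F(z) − μ‖z − z̄‖ e + int K. Then for every T in the upper subdifferential ∂̂⁺F(z̄) and every u in the Bouligand tangent cone T_B(M, z̄), one has T(u) ∉ μ‖u‖ e − int K. -/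
open Set Filter Topology Metric Pointwise
open scoped ENNReal

/-- The upper Fréchet subdifferential of a set-valued map `F` at `zb`, defined via the
epigraphical map `Epi F(z) = F(z) + K`. -/
noncomputable def upperSubdiff {Z X : Type*} [NormedAddCommGroup Z] [NormedSpace ℝ Z]
    [NormedAddCommGroup X] [NormedSpace ℝ X] (K : Set X) (F : Z → Set X) (zb : Z) :
    Set (Z →L[ℝ] X) :=
  {T | Tendsto (fun z => excess (F zb + K + {T (z - zb)}) (F z + K) / ENNReal.ofReal ‖z - zb‖)
      (𝓝[≠] zb) (𝓝 0)}

/-- The Bouligand tangent cone to `M` at `zb`. -/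
def bouligandTangentCone {Z : Type*} [NormedAddCommGroup Z] [NormedSpace ℝ Z]
    (M : Set Z) (zb : Z) : Set Z :=
  {u | ∃ t : ℕ → ℝ, ∃ w : ℕ → Z, (∀ n, 0 < t n) ∧ Tendsto t atTop (𝓝 0) ∧
    Tendsto w atTop (𝓝 u) ∧ ∀ n, zb + t n • w n ∈ M}

/-
Argue by contradiction: suppose `c := μ‖u‖e - Tu` lies in `int K`, say with `B(c, δ) ⊆ int K`, and
let `zₙ = z̄ + tₙwₙ ∈ M` realise the tangent direction `u`. For large `n`, `vₙ := μ‖wₙ‖e - Twₙ` is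
`δ/2`-close to `c`, and the upper subdifferential moves every `x ∈ F(z̄)` by `T(zₙ - z̄) = tₙTwₙ` to
within `o(tₙ)` of some `y + k ∈ F(zₙ) + K`. Dividing the error by `tₙ` perturbs `vₙ` by less than
`δ/2`, so `x = (y - μ‖zₙ - z̄‖e) + (k + tₙg)` with `g ∈ int K`, i.e.
`F(z̄) ⊆ F(zₙ) - μ‖zₙ - z̄‖e + int K`, against sharpness at `zₙ`. (For `u = 0` sharpness at `z̄`
itself fails, as `0 ∈ int K`.)
-/

lemma smul_mem_interior_of_forall_smul_mem {X : Type*} [NormedAddCommGroup X] [NormedSpace ℝ X]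
    {K : Set X} (hK_cone : ∀ t : ℝ, 0 ≤ t → ∀ x ∈ K, t • x ∈ K) {t : ℝ} (ht : 0 < t) {x : X}
    (hx : x ∈ interior K) : t • x ∈ interior K := by
  have hsub : interior (t • K) ⊆ interior K :=
    interior_mono fun _ ⟨y, hy, hxy⟩ => hxy ▸ hK_cone t ht.le y hy
  exact hsub (by rw [interior_smul₀ ht.ne']; exact smul_mem_smul_set hx)

lemma add_mem_interior_of_add_subset {X : Type*} [TopologicalSpace X] [AddGroup X]
    [ContinuousConstVAdd X X] {K : Set X} (hK_add : K + K ⊆ K) {k x : X} (hk : k ∈ K)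
    (hx : x ∈ interior K) : k + x ∈ interior K :=
  interior_mono hK_add (subset_interior_add_right (add_mem_add hk hx))

lemma exists_dist_lt_of_excess_lt {Y : Type*} [SeminormedAddCommGroup Y] {A B : Set Y} {a : Y}
    (ha : a ∈ A) {r : ℝ} (h : excess A B < ENNReal.ofReal r) : ∃ b ∈ B, dist a b < r := by
  have hinf : Metric.infEDist a B < ENNReal.ofReal r :=
    (le_biSup (fun x => Metric.infEDist x B) ha).trans_lt h
  obtain ⟨b, hb, hab⟩ := Metric.infEDist_lt_iff.mp hinf
  exact ⟨b, hb, edist_lt_ofReal.mp hab⟩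

section UpperSubdiff

variable {Z X : Type*} [NormedAddCommGroup Z] [NormedSpace ℝ Z] [NormedAddCommGroup X]
  [NormedSpace ℝ X] {K : Set X} {F : Z → Set X} {zb : Z} {T : Z →L[ℝ] X}

lemma eventually_excess_lt_of_mem_upperSubdiff (hT : T ∈ upperSubdiff K F zb) {ε : ℝ}
    (hε : 0 < ε) :
    ∀ᶠ z in 𝓝[≠] zb,
      excess (F zb + K + {T (z - zb)}) (F z + K) < ENNReal.ofReal (ε * ‖z - zb‖) := by
  filter_upwards [hT.eventually (gt_mem_nhds (ENNReal.ofReal_pos.mpr hε)), self_mem_nhdsWithin]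
    with z hz hne
  have hpos : ENNReal.ofReal ‖z - zb‖ ≠ 0 := by simpa [sub_eq_zero] using hne
  rw [ENNReal.ofReal_mul hε.le]
  exact (ENNReal.div_lt_iff (Or.inl hpos) (Or.inl ENNReal.ofReal_ne_top)).mp hz

lemma subset_sub_add_interior_of_excess_lt (hK_cone : ∀ t : ℝ, 0 ≤ t → ∀ x ∈ K, t • x ∈ K)
    (hK_add : K + K ⊆ K) (h0K : (0 : X) ∈ K) {μ : ℝ} {e : X} {z w : Z} {s r : ℝ} (hs : 0 < s)
    (hz : z - zb = s • w) (hball : ball ((μ * ‖w‖) • e - T w) r ⊆ interior K)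
    (hexc : excess (F zb + K + {T (z - zb)}) (F z + K) < ENNReal.ofReal (s * r)) :
    F zb ⊆ F z - {(μ * ‖z - zb‖) • e} + interior K := by
  intro x hx
  have hxT : x + T (z - zb) ∈ F zb + K + {T (z - zb)} :=
    add_mem_add (by simpa using add_mem_add hx h0K) rfl
  obtain ⟨_, ⟨y, hy, k, hk, rfl⟩, hdist⟩ := exists_dist_lt_of_excess_lt hxT hexc
  set g := (μ * ‖w‖) • e - T w + s⁻¹ • (x + T (z - zb) - (y + k)) with hg
  have hgK : g ∈ interior K := by
    refine hball ?_
    rw [mem_ball, dist_eq_norm, hg, add_sub_cancel_left, norm_smul, Real.norm_eq_abs,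
      abs_of_pos (inv_pos.mpr hs), ← dist_eq_norm, inv_mul_lt_iff₀ hs]
    exact hdist
  have hkg : k + s • g ∈ interior K :=
    add_mem_interior_of_add_subset hK_add hk (smul_mem_interior_of_forall_smul_mem hK_cone hs hgK)
  refine ⟨y - (μ * ‖z - zb‖) • e, sub_mem_sub hy rfl, k + s • g, hkg, ?_⟩
  rw [hg, hz, norm_smul, Real.norm_eq_abs, abs_of_pos hs, map_smul, smul_add,
    smul_inv_smul₀ hs.ne']
  module

end UpperSubdiff

lemma tendsto_add_smul_nhdsNE {Z ι : Type*} [NormedAddCommGroup Z] [NormedSpace ℝ Z]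
    {l : Filter ι} {t : ι → ℝ} {w : ι → Z} {u : Z} (zb : Z) (ht : ∀ i, t i ≠ 0)
    (ht0 : Tendsto t l (𝓝 0)) (hw : Tendsto w l (𝓝 u)) (hu : u ≠ 0) :
    Tendsto (fun i => zb + t i • w i) l (𝓝[≠] zb) := by
  refine tendsto_nhdsWithin_iff.mpr ⟨?_, ?_⟩
  · simpa using tendsto_const_nhds.add (ht0.smul hw)
  · filter_upwards [hw.eventually_ne hu] with i hi
    simpa using smul_ne_zero (ht i) hi

theorem sharp_weak_minimum_necessary_condition_general {Z X : Type*} [NormedAddCommGroup Z]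
    [NormedSpace ℝ Z] [NormedAddCommGroup X] [NormedSpace ℝ X]
    (K : Set X)
    (hK_cone : ∀ t : ℝ, 0 ≤ t → ∀ x ∈ K, t • x ∈ K)
    (hK_add : K + K ⊆ K)
    (M : Set Z)
    (F : Z → Set X)
    (zb : Z) (hzb : zb ∈ M)
    (μ : ℝ) (e : X) (he : e ∈ K \ {0})
    (hsharp : ∀ z ∈ M, ¬ F zb ⊆ F z - {(μ * ‖z - zb‖) • e} + interior K) :
    ∀ T ∈ upperSubdiff K F zb, ∀ u ∈ bouligandTangentCone M zb,
      (μ * ‖u‖) • e - T u ∉ interior K := by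
  intro T hT u hu hc
  by_cases hu0 : u = 0
  · subst hu0
    exact hsharp zb hzb fun x hx => ⟨x, by simpa using hx, 0, by simpa using hc, add_zero x⟩
  obtain ⟨t, w, ht, ht0, hw, hmem⟩ := hu
  obtain ⟨δ, hδ, hball⟩ := Metric.isOpen_iff.mp isOpen_interior _ hc
  have hv : Tendsto (fun n => (μ * ‖w n‖) • e - T (w n)) atTop (𝓝 ((μ * ‖u‖) • e - T u)) :=
    ((hw.norm.const_mul μ).smul_const e).sub ((T.continuous.tendsto u).comp hw)
  have hε : 0 < δ / 2 / (‖u‖ + 1) := by positivity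
  obtain ⟨n, hvn, hwn, hexc⟩ := ((hv.eventually (ball_mem_nhds _ (half_pos hδ))).and
    ((hw.norm.eventually (gt_mem_nhds (lt_add_one ‖u‖))).and
    ((tendsto_add_smul_nhdsNE zb (fun n => (ht n).ne') ht0 hw hu0).eventually
      (eventually_excess_lt_of_mem_upperSubdiff hT hε)))).exists
  have hstep : δ / 2 / (‖u‖ + 1) * ‖zb + t n • w n - zb‖ ≤ t n * (δ / 2) := by
    rw [add_sub_cancel_left, norm_smul, Real.norm_of_nonneg (ht n).le, div_mul_eq_mul_div,
      div_le_iff₀ (by positivity)]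
    have := mul_le_mul_of_nonneg_left hwn.le (mul_nonneg (ht n).le (half_pos hδ).le)
    nlinarith
  refine hsharp _ (hmem n) (subset_sub_add_interior_of_excess_lt hK_cone hK_add
    (by simpa using hK_cone 0 le_rfl e he.1) (ht n) (add_sub_cancel_left _ _)
    ((ball_subset_ball' ?_).trans hball) (hexc.trans_le (ENNReal.ofReal_le_ofReal hstep)))
  linarith [mem_ball.mp hvn]

/-- Necessary optimality condition for sharp weak minima (Proposition 34). -/
theorem sharp_weak_minimum_necessary_condition {Z X : Type*} [NormedAddCommGroup Z]
    [NormedSpace ℝ Z] [NormedAddCommGroup X] [NormedSpace ℝ X]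
    (K : Set X)
    (hK_closed : IsClosed K) (hK_conv : Convex ℝ K)
    (hK_cone : ∀ t : ℝ, 0 ≤ t → ∀ x ∈ K, t • x ∈ K)
    (hK_add : K + K ⊆ K) (hK_pointed : K ∩ (-K) = {0})
    (hK_solid : (interior K).Nonempty)
    (M : Set Z) (hM : M.Nonempty) (hMclosed : IsClosed M)
    (F : Z → Set X) (hF : ∀ z, (F z).Nonempty)
    (zb : Z) (hzb : zb ∈ M)
    (μ : ℝ) (hμ : 0 < μ) (e : X) (he : e ∈ K \ {0})
    (hsharp : ∀ z ∈ M, ¬ F zb ⊆ F z - {(μ * ‖z - zb‖) • e} + interior K) :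
    ∀ T ∈ upperSubdiff K F zb, ∀ u ∈ bouligandTangentCone M zb,
      (μ * ‖u‖) • e - T u ∉ interior K :=
  sharp_weak_minimum_necessary_condition_general K hK_cone hK_add M F zb hzb μ e he hsharp
end
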